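/- arXiv:math/0511178 — 7 statements merged into one kernel-verified Lean document; each statement's English description precedes it below -/
import Mathlib

section
/- The density ρ(q,p,ξ) = exp(−β[H(q,p) + ξ²/(2Q)]) satisfies the steady-state Liouville equation div(ρ f) = 0, where f is the Nosé-Hoover vector field f(q,p,ξ) = (p/m, −∇V(q) − (ξ/Q)p, |p|²/m − nMβ⁻¹); hence this density gives an invariant measure for the Nosé-Hoover flow. -/
open Finset

lemma nh_trace_eq_diag (N : ℕ)
    (L : ((Fin N → ℝ) × (Fin N → ℝ) × ℝ) →ₗ[ℝ] ((Fin N → ℝ) × (Fin N → ℝ) × ℝ)) :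
    LinearMap.trace ℝ _ L = (∑ i, (L (Pi.single i 1, 0, 0)).1 i)
      + ((∑ i, (L (0, Pi.single i 1, 0)).2.1 i) + (L (0, 0, 1)).2.2) := by
  let b := (Pi.basisFun ℝ (Fin N)).prod ((Pi.basisFun ℝ (Fin N)).prod (Module.Basis.singleton Unit ℝ))
  rw [LinearMap.trace_eq_matrix_trace ℝ b, Matrix.trace]
  simp [Matrix.diag, LinearMap.toMatrix_apply, b, Fintype.sum_sum_type,
    Module.Basis.prod_apply, Module.Basis.prod_repr_inl, Module.Basis.prod_repr_inr, Pi.basisFun_apply,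
    Pi.basisFun_repr, Module.Basis.singleton_apply, Module.Basis.singleton_repr, Prod.ext_iff]
  rfl

lemma nh_hasDerivAt_line {E F : Type*} [NormedAddCommGroup E] [NormedSpace ℝ E]
    [NormedAddCommGroup F] [NormedSpace ℝ F] {G : E → F} {z : E} (v : E)
    (h : DifferentiableAt ℝ G z) :
    HasDerivAt (fun t : ℝ => G (z + t • v)) (fderiv ℝ G z v) 0 := by
  have hline : HasDerivAt (fun t : ℝ => z + t • v) v 0 := by
    simpa using ((hasDerivAt_id (0:ℝ)).smul_const v).const_add z
  have h' : HasFDerivAt G (fderiv ℝ G z) ((fun t : ℝ => z + t • v) 0) := by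
    simpa using h.hasFDerivAt
  exact h'.comp_hasDerivAt 0 hline

lemma nh_alg (N : ℕ) (β Q m ξ R c : ℝ) (hβ : β ≠ 0) (hQ : Q ≠ 0) (hm : m ≠ 0)
    (p dV : Fin N → ℝ) (hc : c = N) :
    (∑ i, R * (-β * dV i) * (p i / m))
    + ((∑ i, (R * (-β * (p i / m)) * (-(dV i) - ξ / Q * p i) + R * (-(ξ / Q))))
    + R * (-β * (ξ / Q)) * ((∑ i, (p i) ^ 2) / m - c / β)) = 0 := by
  have e1 : ∀ i : Fin N, R * (-β * dV i) * (p i / m)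
      + (R * (-β * (p i / m)) * (-(dV i) - ξ / Q * p i) + R * (-(ξ / Q)))
      = β * ξ / (Q * m) * (R * (p i) ^ 2) - R * (ξ / Q) := by
    intro i; field_simp; ring
  rw [← add_assoc, ← Finset.sum_add_distrib,
    Finset.sum_congr rfl (fun i _ => e1 i), Finset.sum_sub_distrib,
    ← Finset.mul_sum, ← Finset.mul_sum, Finset.sum_const, Finset.card_univ,
    Fintype.card_fin, nsmul_eq_mul, hc]
  field_simp
  ring

/-- The density ρ(q,p,ξ) = exp(−β[H(q,p) + ξ²/(2Q)]) satisfies the steady-state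
Liouville equation div(ρ f) = 0 for the Nosé-Hoover vector field
f(q,p,ξ) = (p/m, −∇V(q) − (ξ/Q)p, |p|²/m − nMβ⁻¹).  The divergence is expressed
as the trace of the total derivative of ρ • f. -/
theorem stmt_0 (n M : ℕ) (β Q m : ℝ) (hβ : 0 < β) (hQ : 0 < Q) (hm : 0 < m)
    (V : (Fin (n * M) → ℝ) → ℝ) (hV : ContDiff ℝ (⊤ : ℕ∞) V)
    (f ρf : ((Fin (n * M) → ℝ) × (Fin (n * M) → ℝ) × ℝ) →
      ((Fin (n * M) → ℝ) × (Fin (n * M) → ℝ) × ℝ))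
    (ρ : ((Fin (n * M) → ℝ) × (Fin (n * M) → ℝ) × ℝ) → ℝ)
    (hf : ∀ z, f z =
      (fun i => z.2.1 i / m,
       fun i => -(fderiv ℝ V z.1 (Pi.single i 1)) - z.2.2 / Q * z.2.1 i,
       (∑ i, (z.2.1 i) ^ 2) / m - (n * M : ℝ) / β))
    (hρ : ∀ z, ρ z = Real.exp (-β * (((∑ i, (z.2.1 i) ^ 2) / (2 * m) + V z.1)
      + z.2.2 ^ 2 / (2 * Q))))
    (hρf : ∀ z, ρf z = ρ z • f z) :
    ∀ z, LinearMap.trace ℝ ((Fin (n * M) → ℝ) × (Fin (n * M) → ℝ) × ℝ)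
      (fderiv ℝ ρf z : ((Fin (n * M) → ℝ) × (Fin (n * M) → ℝ) × ℝ) →ₗ[ℝ]
        ((Fin (n * M) → ℝ) × (Fin (n * M) → ℝ) × ℝ)) = 0 := by
  intro z
  have hV' := hV.differentiable (by simp)
  -- differentiability of ρf
  have hρd : Differentiable ℝ ρ := by
    rw [funext hρ]; fun_prop
  have hfd : Differentiable ℝ f := by
    have hfdV : Differentiable ℝ (fderiv ℝ V) :=
      (hV.fderiv_right (m := 1) (by exact WithTop.coe_le_coe.mpr le_top)).differentiable one_ne_zero
    rw [funext hf]; fun_prop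
  have hρfd : Differentiable ℝ ρf := by
    rw [funext hρf]; exact hρd.smul hfd
  -- q-direction diagonal entries
  have key1 : ∀ i : Fin (n * M), (fderiv ℝ ρf z (Pi.single i 1, 0, 0)).1 i
      = ρ z * (-β * fderiv ℝ V z.1 (Pi.single i 1)) * (z.2.1 i / m) := by
    intro i
    set v : ((Fin (n * M) → ℝ) × (Fin (n * M) → ℝ) × ℝ) := (Pi.single i 1, 0, 0) with hv
    have h1 : HasDerivAt (fun t : ℝ => (ρf (z + t • v)).1 i) ((fderiv ℝ ρf z v).1 i) 0 := by
      have hl := nh_hasDerivAt_line v (hρfd z)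
      have := (((ContinuousLinearMap.proj (R := ℝ) (φ := fun _ : Fin (n * M) => ℝ) i).comp
        (ContinuousLinearMap.fst ℝ (Fin (n * M) → ℝ) ((Fin (n * M) → ℝ) × ℝ))).hasFDerivAt).comp_hasDerivAt 0 hl
      exact this
    have hfun : (fun t : ℝ => (ρf (z + t • v)).1 i)
        = fun t => Real.exp (-β * (((∑ j, (z.2.1 j) ^ 2) / (2 * m)
            + V (z.1 + t • Pi.single i 1)) + z.2.2 ^ 2 / (2 * Q))) * (z.2.1 i / m) := by
      funext t
      simp [hρf, hρ, hf, hv, Prod.smul_def, smul_eq_mul, div_eq_mul_inv, mul_comm]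
    have hVl : HasDerivAt (fun t : ℝ => V (z.1 + t • (Pi.single i 1 : Fin (n * M) → ℝ)))
        (fderiv ℝ V z.1 (Pi.single i 1)) 0 :=
      nh_hasDerivAt_line (Pi.single i 1) (hV' z.1)
    have h2 : HasDerivAt (fun t : ℝ => (ρf (z + t • v)).1 i)
        (ρ z * (-β * fderiv ℝ V z.1 (Pi.single i 1)) * (z.2.1 i / m)) 0 := by
      have h3 := ((((hVl.const_add ((∑ j, (z.2.1 j) ^ 2) / (2 * m))).add_const
        (z.2.2 ^ 2 / (2 * Q))).const_mul (-β)).exp).mul_const (z.2.1 i / m)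
      simp only [zero_smul, add_zero] at h3
      rw [hfun, hρ z]
      exact h3
    exact h1.unique h2
  -- p-direction diagonal entries
  have key2 : ∀ i : Fin (n * M), (fderiv ℝ ρf z (0, Pi.single i 1, 0)).2.1 i
      = ρ z * (-β * (z.2.1 i / m)) * (-(fderiv ℝ V z.1 (Pi.single i 1)) - z.2.2 / Q * z.2.1 i)
        + ρ z * (-(z.2.2 / Q)) := by
    intro i
    set v : ((Fin (n * M) → ℝ) × (Fin (n * M) → ℝ) × ℝ) := (0, Pi.single i 1, 0) with hv
    have h1 : HasDerivAt (fun t : ℝ => (ρf (z + t • v)).2.1 i) ((fderiv ℝ ρf z v).2.1 i) 0 := by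
      have hl := nh_hasDerivAt_line v (hρfd z)
      have := (((ContinuousLinearMap.proj (R := ℝ) (φ := fun _ : Fin (n * M) => ℝ) i).comp
        ((ContinuousLinearMap.fst ℝ (Fin (n * M) → ℝ) ℝ).comp
          (ContinuousLinearMap.snd ℝ (Fin (n * M) → ℝ) ((Fin (n * M) → ℝ) × ℝ)))).hasFDerivAt).comp_hasDerivAt 0 hl
      exact this
    have hfun : (fun t : ℝ => (ρf (z + t • v)).2.1 i)
        = fun t => Real.exp (-β * (((∑ j, (z.2.1 j + t * (Pi.single i 1 : Fin (n * M) → ℝ) j) ^ 2) / (2 * m)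
            + V z.1) + z.2.2 ^ 2 / (2 * Q)))
          * (-(fderiv ℝ V z.1 (Pi.single i 1))
              - z.2.2 / Q * (z.2.1 i + t * (Pi.single i 1 : Fin (n * M) → ℝ) i)) := by
      funext t
      simp [hρf, hρ, hf, hv, Prod.smul_def, smul_eq_mul]
    have hS : HasDerivAt (fun t : ℝ => ∑ j, (z.2.1 j + t * (Pi.single i 1 : Fin (n * M) → ℝ) j) ^ 2)
        (2 * z.2.1 i) 0 := by
      have hterm : ∀ j : Fin (n * M),
          HasDerivAt (fun t : ℝ => (z.2.1 j + t * (Pi.single i 1 : Fin (n * M) → ℝ) j) ^ 2)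
          (2 * (z.2.1 j + 0 * (Pi.single i 1 : Fin (n * M) → ℝ) j) ^ 1
            * (Pi.single i 1 : Fin (n * M) → ℝ) j) 0 := by
        intro j
        exact ((hasDerivAt_mul_const ((Pi.single i 1 : Fin (n * M) → ℝ) j)).const_add (z.2.1 j)).pow 2
      have := HasDerivAt.fun_sum (fun j (_ : j ∈ (univ : Finset (Fin (n * M)))) => hterm j)
      exact this.congr_deriv (by simp [Pi.single_apply])
    have hL : HasDerivAt (fun t : ℝ => -(fderiv ℝ V z.1 (Pi.single i 1))
        - z.2.2 / Q * (z.2.1 i + t * (Pi.single i 1 : Fin (n * M) → ℝ) i)) (-(z.2.2 / Q)) 0 := by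
      have h0 : HasDerivAt (fun t : ℝ => t * (Pi.single i 1 : Fin (n * M) → ℝ) i)
          ((Pi.single i 1 : Fin (n * M) → ℝ) i) 0 := hasDerivAt_mul_const _
      have := ((h0.const_add (z.2.1 i)).const_mul (z.2.2 / Q)).const_sub
        (-(fderiv ℝ V z.1 (Pi.single i 1)))
      simpa using this
    have h2 : HasDerivAt (fun t : ℝ => (ρf (z + t • v)).2.1 i)
        (ρ z * (-β * (z.2.1 i / m)) * (-(fderiv ℝ V z.1 (Pi.single i 1)) - z.2.2 / Q * z.2.1 i)
          + ρ z * (-(z.2.2 / Q))) 0 := by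
      have hE := ((((hS.div_const (2 * m)).add_const (V z.1)).add_const
        (z.2.2 ^ 2 / (2 * Q))).const_mul (-β)).exp
      have h3 := hE.mul hL
      simp only [zero_mul, add_zero] at h3
      rw [hfun, hρ z]
      exact h3.congr_deriv (by ring)
    exact h1.unique h2
  -- ξ-direction diagonal entry
  have key3 : (fderiv ℝ ρf z (0, 0, 1)).2.2
      = ρ z * (-β * (z.2.2 / Q)) * ((∑ i, (z.2.1 i) ^ 2) / m - (n * M : ℝ) / β) := by
    set v : ((Fin (n * M) → ℝ) × (Fin (n * M) → ℝ) × ℝ) := (0, 0, 1) with hv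
    have h1 : HasDerivAt (fun t : ℝ => (ρf (z + t • v)).2.2) ((fderiv ℝ ρf z v).2.2) 0 := by
      have hl := nh_hasDerivAt_line v (hρfd z)
      have := (((ContinuousLinearMap.snd ℝ (Fin (n * M) → ℝ) ℝ).comp
        (ContinuousLinearMap.snd ℝ (Fin (n * M) → ℝ) ((Fin (n * M) → ℝ) × ℝ))).hasFDerivAt).comp_hasDerivAt 0 hl
      exact this
    have hfun : (fun t : ℝ => (ρf (z + t • v)).2.2)
        = fun t => Real.exp (-β * (((∑ j, (z.2.1 j) ^ 2) / (2 * m) + V z.1)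
            + (z.2.2 + t) ^ 2 / (2 * Q)))
          * ((∑ j, (z.2.1 j) ^ 2) / m - (n * M : ℝ) / β) := by
      funext t
      simp [hρf, hρ, hf, hv, Prod.smul_def, smul_eq_mul]
    have hξl : HasDerivAt (fun t : ℝ => (z.2.2 + t) ^ 2) (2 * (z.2.2 + 0) ^ 1 * 1) 0 :=
      ((hasDerivAt_id (0:ℝ)).const_add z.2.2).pow 2
    have h2 : HasDerivAt (fun t : ℝ => (ρf (z + t • v)).2.2)
        (ρ z * (-β * (z.2.2 / Q)) * ((∑ i, (z.2.1 i) ^ 2) / m - (n * M : ℝ) / β)) 0 := by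
      have h3 := (((((hξl.div_const (2 * Q)).const_add
        ((∑ j, (z.2.1 j) ^ 2) / (2 * m) + V z.1)).const_mul (-β)).exp).mul_const
        ((∑ j, (z.2.1 j) ^ 2) / m - (n * M : ℝ) / β))
      simp only [add_zero, pow_one, mul_one] at h3
      rw [hfun, hρ z]
      exact h3.congr_deriv (by ring)
    exact h1.unique h2
  -- assemble
  rw [nh_trace_eq_diag (n * M) (fderiv ℝ ρf z : _ →ₗ[ℝ] _)]
  simp only [ContinuousLinearMap.coe_coe]
  rw [Finset.sum_congr rfl (fun i _ => key1 i), Finset.sum_congr rfl (fun i _ => key2 i), key3]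
  exact nh_alg (n * M) β Q m z.2.2 (ρ z) ((n * M : ℝ)) hβ.ne' hQ.ne' hm.ne'
    (fun i => z.2.1 i) (fun i => fderiv ℝ V z.1 (Pi.single i 1)) (by push_cast; ring)
end

section
/- The potential V(σ) = e^σ − 1 − σ satisfies Chicone's criterion 6·V(σ)·V''(σ)² − 3·V'(σ)²·V''(σ) − 2·V(σ)·V'(σ)·V''(σ) > 0 for all σ ≠ 0. -/
/-!
The Chicone expression factors as e^σ · g(σ) with g(σ) = (e^σ - 1)(e^σ + 5) - 2σ(2e^σ + 1).
Since g(0) = 0 and g'(σ) = 4e^σ(sinh σ - σ) has the sign of σ, g decreases to 0 on (-∞, 0] and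
increases from 0 on [0, ∞).
-/

open Real Set

theorem pos_of_ne_of_deriv_neg_of_deriv_pos {f : ℝ → ℝ} {a : ℝ} (hf : Differentiable ℝ f)
    (ha : f a = 0) (hneg : ∀ x, x < a → deriv f x < 0) (hpos : ∀ x, a < x → 0 < deriv f x)
    {x : ℝ} (hx : x ≠ a) : 0 < f x := by
  rcases hx.lt_or_gt with hlt | hgt
  · have hanti : StrictAntiOn f (Iic a) :=
      strictAntiOn_of_deriv_neg (convex_Iic a) hf.continuous.continuousOn
        (fun y hy => hneg y (by simpa using hy))
    exact ha ▸ hanti hlt.le self_mem_Iic hlt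
  · have hmono : StrictMonoOn f (Ici a) :=
      strictMonoOn_of_deriv_pos (convex_Ici a) hf.continuous.continuousOn
        (fun y hy => hpos y (by simpa using hy))
    exact ha ▸ hmono self_mem_Ici hgt.le hgt

noncomputable def chiconeFactor (σ : ℝ) : ℝ :=
  (exp σ - 1) * (exp σ + 5) - 2 * σ * (2 * exp σ + 1)

theorem hasDerivAt_chiconeFactor (σ : ℝ) :
    HasDerivAt chiconeFactor (4 * exp σ * (sinh σ - σ)) σ := by
  have h := (((hasDerivAt_exp σ).sub_const 1).mul ((hasDerivAt_exp σ).add_const 5)).sub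
    (((hasDerivAt_id σ).const_mul 2).mul (((hasDerivAt_exp σ).const_mul 2).add_const 1))
  refine h.congr_deriv ?_
  rw [id, sinh_eq, exp_neg]
  field_simp
  ring

theorem deriv_chiconeFactor (σ : ℝ) : deriv chiconeFactor σ = 4 * exp σ * (sinh σ - σ) :=
  (hasDerivAt_chiconeFactor σ).deriv

theorem chiconeFactor_pos {σ : ℝ} (hσ : σ ≠ 0) : 0 < chiconeFactor σ := by
  refine pos_of_ne_of_deriv_neg_of_deriv_pos
    (fun s => (hasDerivAt_chiconeFactor s).differentiableAt) (by simp [chiconeFactor])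
    (fun s hs => ?_) (fun s hs => ?_) hσ
  · rw [deriv_chiconeFactor]
    exact mul_neg_of_pos_of_neg (by positivity) (sub_neg.mpr (sinh_lt_self_iff.mpr hs))
  · rw [deriv_chiconeFactor]
    exact mul_pos (by positivity) (sub_pos.mpr (self_lt_sinh_iff.mpr hs))

/-- The potential V(σ) = e^σ − 1 − σ (with V' = e^σ − 1, V'' = e^σ) satisfies
Chicone's monotone-period criterion 6·V·V''² − 3·V'²·V'' − 2·V·V'·V'' > 0 for
all σ ≠ 0. -/
theorem stmt_7 :
    ∀ σ : ℝ, σ ≠ 0 →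
      0 < 6 * (Real.exp σ - 1 - σ) * (Real.exp σ) ^ 2
          - 3 * (Real.exp σ - 1) ^ 2 * Real.exp σ
          - 2 * (Real.exp σ - 1 - σ) * (Real.exp σ - 1) * Real.exp σ := by
  intro σ hσ
  have hfactor : 6 * (exp σ - 1 - σ) * exp σ ^ 2 - 3 * (exp σ - 1) ^ 2 * exp σ
      - 2 * (exp σ - 1 - σ) * (exp σ - 1) * exp σ = exp σ * chiconeFactor σ := by
    rw [chiconeFactor]
    ring
  rw [hfactor]
  exact mul_pos (exp_pos σ) (chiconeFactor_pos hσ)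
end

section
/- The function σ ↦ V(σ)/V'(σ)², where V(σ) = e^σ − 1 − σ, extends continuously to σ = 0 with value 1/2 and is strictly convex on ℝ. -/
/-!
Write `V(σ) = σ² A(σ)` and `V'(σ) = σ B(σ)` with `B = dslope exp 0` and `A = dslope B 0`. Both are
real-analytic, `B` never vanishes and `A(0) = 1/2` is the second Taylor coefficient of `exp`, so
`A / B²` is an analytic extension. Away from `0` its second derivative is
`e^σ g(σ) / (e^σ - 1)⁴` with `g(σ) = e^{2σ} + 4e^σ - 4σe^σ - 2σ - 5`. Since `g(0) = g'(0) = 0` and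
`g''(σ) = 4e^σ V(σ) > 0` for `σ ≠ 0`, `g` is positive off `0`, so the continuous derivative of the
extension is strictly increasing.
-/

open Filter Set Real

theorem AnalyticAt.dslope {𝕜 E : Type*} [NontriviallyNormedField 𝕜] [NormedAddCommGroup E]
    [NormedSpace 𝕜 E] {f : 𝕜 → E} {a b : 𝕜} (ha : AnalyticAt 𝕜 f a) (hb : AnalyticAt 𝕜 f b) :
    AnalyticAt 𝕜 (dslope f a) b := by
  rcases eq_or_ne b a with rfl | hba
  · obtain ⟨p, hp⟩ := ha
    exact hp.has_fpower_series_dslope_fslope.analyticAt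
  · refine AnalyticAt.congr ?_ (dslope_eventuallyEq_slope_of_ne f hba).symm
    simp only [slope_fun_def]
    exact ((analyticAt_id.sub analyticAt_const).inv (sub_ne_zero.2 hba)).smul
      (hb.sub analyticAt_const)

theorem AnalyticOnNhd.dslope {𝕜 E : Type*} [NontriviallyNormedField 𝕜] [NormedAddCommGroup E]
    [NormedSpace 𝕜 E] {f : 𝕜 → E} {s : Set 𝕜} {a : 𝕜} (hf : AnalyticOnNhd 𝕜 f s) (ha : a ∈ s) :
    AnalyticOnNhd 𝕜 (dslope f a) s :=
  fun _ hb ↦ (hf a ha).dslope (hf _ hb)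

theorem strictMono_of_deriv_pos_of_ne {f : ℝ → ℝ} (hf : Continuous f) (a : ℝ)
    (hf' : ∀ x ≠ a, 0 < deriv f x) : StrictMono f := by
  refine StrictMonoOn.Iic_union_Ici (a := a) ?_ ?_
  · refine strictMonoOn_of_deriv_pos (convex_Iic a) hf.continuousOn fun x hx ↦ ?_
    exact hf' x (by rw [interior_Iic] at hx; exact hx.ne)
  · refine strictMonoOn_of_deriv_pos (convex_Ici a) hf.continuousOn fun x hx ↦ ?_
    exact hf' x (by rw [interior_Ici] at hx; exact hx.ne')

theorem pos_of_deriv_eq_zero_of_deriv2_pos {g g' g'' : ℝ → ℝ} {a : ℝ}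
    (hg : ∀ x, HasDerivAt g (g' x) x) (hg' : ∀ x, HasDerivAt g' (g'' x) x)
    (hga : g a = 0) (hg'a : g' a = 0) (hg'' : ∀ x ≠ a, 0 < g'' x) {x : ℝ} (hx : x ≠ a) :
    0 < g x := by
  have hcont : Continuous g := continuous_iff_continuousAt.2 fun x ↦ (hg x).continuousAt
  have hmono : StrictMono g' :=
    strictMono_of_deriv_pos_of_ne (continuous_iff_continuousAt.2 fun x ↦ (hg' x).continuousAt) a
      fun x hx ↦ (hg' x).deriv ▸ hg'' x hx
  rw [← hga]
  rcases hx.lt_or_gt with hxa | hax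
  · refine strictAntiOn_of_deriv_neg (convex_Iic a) hcont.continuousOn (fun y hy ↦ ?_)
      hxa.le self_mem_Iic hxa
    rw [interior_Iic] at hy
    rw [(hg y).deriv, ← hg'a]
    exact hmono hy
  · refine strictMonoOn_of_deriv_pos (convex_Ici a) hcont.continuousOn (fun y hy ↦ ?_)
      self_mem_Ici hax.le hax
    rw [interior_Ici] at hy
    rw [(hg y).deriv, ← hg'a]
    exact hmono hy

lemma exp_sub_one_ne_zero {σ : ℝ} (hσ : σ ≠ 0) : exp σ - 1 ≠ 0 :=
  sub_ne_zero.2 ((exp_eq_one_iff σ).not.2 hσ)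

lemma dslope_exp_zero_of_ne {σ : ℝ} (hσ : σ ≠ 0) : dslope exp 0 σ = (exp σ - 1) / σ := by
  rw [dslope_of_ne _ hσ, slope_def_field, exp_zero, sub_zero]

lemma dslope_exp_zero_self : dslope exp 0 0 = 1 := by
  rw [dslope_same, Real.deriv_exp, exp_zero]

lemma dslope_exp_zero_ne_zero (σ : ℝ) : dslope exp 0 σ ≠ 0 := by
  rcases eq_or_ne σ 0 with rfl | hσ
  · exact dslope_exp_zero_self ▸ one_ne_zero
  · rw [dslope_exp_zero_of_ne hσ]
    exact div_ne_zero (exp_sub_one_ne_zero hσ) hσ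

lemma dslope_dslope_exp_zero_self : dslope (dslope exp 0) 0 0 = 1 / 2 := by
  have hp := NormedSpace.exp_hasFPowerSeriesAt_zero (𝕂 := ℝ) (𝔸 := ℝ)
  rw [← Real.exp_eq_exp_ℝ] at hp
  rw [← hp.has_fpower_series_dslope_fslope.has_fpower_series_dslope_fslope.coeff_zero (fun _ ↦ 1)]
  change FormalMultilinearSeries.coeff _ 0 = _
  rw [FormalMultilinearSeries.coeff_fslope, FormalMultilinearSeries.coeff_fslope]
  change NormedSpace.expSeries ℝ ℝ 2 (fun _ ↦ 1) = _
  rw [NormedSpace.expSeries_apply_eq_div]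
  norm_num

-- `V(σ) / V'(σ)²` with the common factor `σ²` cancelled.
noncomputable def expRatio (σ : ℝ) : ℝ :=
  dslope (dslope exp 0) 0 σ / dslope exp 0 σ ^ 2

lemma expRatio_zero : expRatio 0 = 1 / 2 := by
  rw [expRatio, dslope_dslope_exp_zero_self, dslope_exp_zero_self, one_pow, div_one]

lemma expRatio_of_ne {σ : ℝ} (hσ : σ ≠ 0) :
    expRatio σ = (exp σ - 1 - σ) / (exp σ - 1) ^ 2 := by
  have h1 := exp_sub_one_ne_zero hσ
  rw [expRatio, dslope_of_ne _ hσ, slope_def_field, dslope_exp_zero_of_ne hσ, dslope_exp_zero_self]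
  field_simp
  ring

lemma analyticOnNhd_expRatio : AnalyticOnNhd ℝ expRatio univ := by
  have hB : AnalyticOnNhd ℝ (dslope exp 0) univ := analyticOnNhd_rexp.dslope (mem_univ 0)
  exact fun σ _ ↦ ((hB.dslope (mem_univ 0)) σ trivial).div ((hB σ trivial).pow 2)
    (pow_ne_zero 2 (dslope_exp_zero_ne_zero σ))

lemma contDiff_expRatio {n : WithTop ℕ∞} : ContDiff ℝ n expRatio :=
  analyticOnNhd_expRatio.contDiff

lemma continuous_expRatio : Continuous expRatio :=
  contDiff_expRatio.continuous (n := 0)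

lemma hasDerivAt_expRatio {σ : ℝ} (hσ : σ ≠ 0) :
    HasDerivAt expRatio ((1 - exp σ ^ 2 + 2 * σ * exp σ) / (exp σ - 1) ^ 3) σ := by
  have h1 := exp_sub_one_ne_zero hσ
  have hq := (((hasDerivAt_exp σ).sub_const 1).sub (hasDerivAt_id σ)).div
    (((hasDerivAt_exp σ).sub_const 1).pow 2) (pow_ne_zero 2 h1)
  refine (hq.congr_of_eventuallyEq ?_).congr_deriv ?_
  · filter_upwards [isOpen_ne.mem_nhds hσ] with x hx using expRatio_of_ne hx
  · simp only [id, Pi.sub_apply, Pi.pow_apply]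
    field_simp
    ring

lemma hasDerivAt_deriv_expRatio {σ : ℝ} (hσ : σ ≠ 0) :
    HasDerivAt (deriv expRatio)
      (exp σ * (exp σ ^ 2 + 4 * exp σ - 4 * σ * exp σ - 2 * σ - 5) / (exp σ - 1) ^ 4) σ := by
  have h1 := exp_sub_one_ne_zero hσ
  have hq := ((((hasDerivAt_exp σ).pow 2).const_sub 1).add
    (((hasDerivAt_id σ).const_mul 2).mul (hasDerivAt_exp σ))).div
    (((hasDerivAt_exp σ).sub_const 1).pow 3) (pow_ne_zero 3 h1)
  refine (hq.congr_of_eventuallyEq ?_).congr_deriv ?_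
  · filter_upwards [isOpen_ne.mem_nhds hσ] with x hx using (hasDerivAt_expRatio hx).deriv
  · simp only [id, Pi.add_apply, Pi.mul_apply, Pi.pow_apply]
    field_simp
    ring

lemma exp_sq_add_four_mul_exp_sub_pos {σ : ℝ} (hσ : σ ≠ 0) :
    0 < exp σ ^ 2 + 4 * exp σ - 4 * σ * exp σ - 2 * σ - 5 := by
  refine pos_of_deriv_eq_zero_of_deriv2_pos
    (g := fun x ↦ exp x ^ 2 + 4 * exp x - 4 * x * exp x - 2 * x - 5)
    (g' := fun x ↦ 2 * exp x ^ 2 - 4 * x * exp x - 2)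
    (g'' := fun x ↦ 4 * exp x * (exp x - 1 - x)) (fun x ↦ ?_) (fun x ↦ ?_) (by norm_num)
    (by norm_num) (fun x hx ↦ ?_) hσ
  · have := (((((hasDerivAt_exp x).pow 2).add ((hasDerivAt_exp x).const_mul 4)).sub
      (((hasDerivAt_id x).const_mul 4).mul (hasDerivAt_exp x))).sub
      ((hasDerivAt_id x).const_mul 2)).sub_const 5
    exact this.congr_deriv (by simp only [id]; ring)
  · have := ((((hasDerivAt_exp x).pow 2).const_mul 2).sub
      (((hasDerivAt_id x).const_mul 4).mul (hasDerivAt_exp x))).sub_const 2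
    exact this.congr_deriv (by simp only [id]; ring)
  · have := add_one_lt_exp hx
    have := exp_pos x
    have : 0 < exp x - 1 - x := by linarith
    positivity

lemma strictMono_deriv_expRatio : StrictMono (deriv expRatio) := by
  refine strictMono_of_deriv_pos_of_ne (contDiff_expRatio.continuous_deriv le_rfl) 0
    fun σ hσ ↦ ?_
  rw [(hasDerivAt_deriv_expRatio hσ).deriv]
  have := exp_sq_add_four_mul_exp_sub_pos hσ
  have := Even.pow_pos (by decide : Even 4) (exp_sub_one_ne_zero hσ)
  positivity

/-- The function σ ↦ V(σ)/Vʹ(σ)², where V(σ) = e^σ − 1 − σ, extends continuously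
to σ = 0 with value 1/2, and the extension is strictly convex on ℝ. -/
theorem stmt_8 :
    ∃ F : ℝ → ℝ, Continuous F ∧ F 0 = 1 / 2 ∧
      (∀ σ : ℝ, σ ≠ 0 →
        F σ = (Real.exp σ - 1 - σ) / (Real.exp σ - 1) ^ 2) ∧
      StrictConvexOn ℝ Set.univ F :=
  ⟨expRatio, continuous_expRatio, expRatio_zero, fun _ ↦ expRatio_of_ne,
    strictMono_deriv_expRatio.strictConvexOn_univ_of_deriv continuous_expRatio⟩
end

section
/- The transformed Nosé-Hoover equations θ' = 1 − εα sinθ cosθ, τ' = −2ετα sin²θ, α' = ε(2τ sin²θ − 1) preserve the volume form e^{−τ−α²/2} dθ dτ dα; equivalently, the divergence of the product of e^{−τ−α²/2} with the vector field vanishes identically. -/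
/-!
The weight `w = e^{-τ-α²/2}` does not depend on `θ`, and `∂_τ w = -w`, `∂_α w = -α w`.
Hence `div(wF) = w (div F - F₂ - α F₃)`, and with `sin²θ + cos²θ = 1` the bracket is
`εα (sin²θ - cos²θ - 2 sin²θ + 1) = 0`.
-/

open Real

lemma hasDerivAt_sin_mul_cos (x : ℝ) :
    HasDerivAt (fun x => sin x * cos x) (cos x ^ 2 - sin x ^ 2) x :=
  ((hasDerivAt_sin x).fun_mul (hasDerivAt_cos x)).congr_deriv (by ring)

lemma hasDerivAt_exp_neg_sub (c x : ℝ) :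
    HasDerivAt (fun x => exp (-x - c)) (-exp (-x - c)) x :=
  ((hasDerivAt_id' x).fun_neg.sub_const c).exp.congr_deriv (by ring)

lemma hasDerivAt_exp_sub_sq_div_two (c x : ℝ) :
    HasDerivAt (fun x => exp (c - x ^ 2 / 2)) (-x * exp (c - x ^ 2 / 2)) x :=
  (((hasDerivAt_pow 2 x).div_const 2).const_sub c).exp.congr_deriv (by ring)

/-- The transformed Nosé-Hoover equations θ' = 1 − εα sinθ cosθ,
τ' = −2ετα sin²θ, α' = ε(2τ sin²θ − 1) preserve the volume form
e^{−τ−α²/2} dθ dτ dα: the divergence of e^{−τ−α²/2} times the vector field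
vanishes identically. -/
theorem stmt_12 (ε : ℝ) (θ τ α : ℝ) :
    deriv (fun x => Real.exp (-τ - α ^ 2 / 2) *
        (1 - ε * α * Real.sin x * Real.cos x)) θ +
    deriv (fun x => Real.exp (-x - α ^ 2 / 2) *
        (-(2 * ε * x * α * Real.sin θ ^ 2))) τ +
    deriv (fun x => Real.exp (-τ - x ^ 2 / 2) *
        (ε * (2 * τ * Real.sin θ ^ 2 - 1))) α = 0 := by
  have hθ : HasDerivAt (fun x => exp (-τ - α ^ 2 / 2) * (1 - ε * α * sin x * cos x))
      (-(exp (-τ - α ^ 2 / 2) * ε * α * (cos θ ^ 2 - sin θ ^ 2))) θ :=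
    ((((hasDerivAt_sin_mul_cos θ).const_mul (ε * α)).const_sub 1).const_mul _
      |>.congr_of_eventuallyEq (.of_forall fun _ => by ring)).congr_deriv (by ring)
  have hτ : HasDerivAt (fun x => exp (-x - α ^ 2 / 2) * -(2 * ε * x * α * sin θ ^ 2))
      (exp (-τ - α ^ 2 / 2) * (2 * ε * α * sin θ ^ 2) * (τ - 1)) τ :=
    ((hasDerivAt_exp_neg_sub (α ^ 2 / 2) τ).fun_mul
        ((hasDerivAt_id' τ).const_mul (-(2 * ε * α * sin θ ^ 2)))
      |>.congr_of_eventuallyEq (.of_forall fun _ => by ring)).congr_deriv (by ring)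
  have hα := (hasDerivAt_exp_sub_sq_div_two (-τ) α).mul_const (ε * (2 * τ * sin θ ^ 2 - 1))
  rw [hθ.deriv, hτ.deriv, hα.deriv]
  linear_combination (-(exp (-τ - α ^ 2 / 2) * ε * α)) * sin_sq_add_cos_sq θ
end

section
/- For all σ ≠ 0, the inequality 6(e^σ − 1 − σ)e^{2σ} > (e^σ − 1)e^σ·(3(e^σ − 1) + 2(e^σ − 1 − σ)) holds. -/
/-! With `x = e^σ`, the right-hand side minus the left-hand side equals `x · g(σ)` with
`g(σ) = x² + 4x − 5 − 4σx − 2σ` (`chiconeGap`). Then `g(0) = 0` and `g'(σ) = 4x (sinh σ − σ)` has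
the sign of `σ`, so `g` has a strict global minimum at `0`. -/

open Real

lemma lt_of_hasDerivAt_sign_change {f f' : ℝ → ℝ} {a x : ℝ} (hf : ∀ y, HasDerivAt f (f' y) y)
    (hneg : ∀ y < a, f' y < 0) (hpos : ∀ y, a < y → 0 < f' y) (hx : x ≠ a) : f a < f x := by
  have hcont : Continuous f := continuous_iff_continuousAt.2 fun y ↦ (hf y).continuousAt
  rcases hx.lt_or_gt with hxa | hax
  · refine strictAntiOn_of_hasDerivWithinAt_neg (convex_Iic a) hcont.continuousOn
      (fun y _ ↦ (hf y).hasDerivWithinAt) (fun y hy ↦ hneg y ?_) hxa.le Set.self_mem_Iic hxa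
    simpa using hy
  · refine strictMonoOn_of_hasDerivWithinAt_pos (convex_Ici a) hcont.continuousOn
      (fun y _ ↦ (hf y).hasDerivWithinAt) (fun y hy ↦ hpos y ?_) Set.self_mem_Ici hax.le hax
    simpa using hy

noncomputable def chiconeGap (σ : ℝ) : ℝ :=
  exp σ ^ 2 + 4 * exp σ - 5 - 4 * σ * exp σ - 2 * σ

lemma hasDerivAt_chiconeGap (σ : ℝ) :
    HasDerivAt chiconeGap (4 * exp σ * (sinh σ - σ)) σ := by
  have hlin : HasDerivAt (fun y : ℝ ↦ 4 * y) 4 σ := by simpa using (hasDerivAt_id σ).const_mul 4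
  have h := (((((hasDerivAt_exp σ).pow 2).add ((hasDerivAt_exp σ).const_mul 4)).sub_const 5).sub
    (hlin.mul (hasDerivAt_exp σ))).sub ((hasDerivAt_id' σ).const_mul 2)
  refine (h.congr_deriv ?_ : HasDerivAt chiconeGap _ σ)
  have : exp σ * exp (-σ) = 1 := by rw [← exp_add, add_neg_cancel, exp_zero]
  rw [sinh_eq]
  linear_combination 2 * this

lemma chiconeGap_pos {σ : ℝ} (hσ : σ ≠ 0) : 0 < chiconeGap σ := by
  have hzero : chiconeGap 0 = 0 := by norm_num [chiconeGap]
  rw [← hzero]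
  refine lt_of_hasDerivAt_sign_change hasDerivAt_chiconeGap (fun y hy ↦ ?_) (fun y hy ↦ ?_) hσ
  · exact mul_neg_of_pos_of_neg (by positivity) (sub_neg.2 (sinh_lt_self_iff.2 hy))
  · exact mul_pos (by positivity) (sub_pos.2 (self_lt_sinh_iff.2 hy))

/-- For all σ ≠ 0, the inequality
6(e^σ − 1 − σ)e^{2σ} > (e^σ − 1)e^σ·(3(e^σ − 1) + 2(e^σ − 1 − σ)) holds. -/
theorem stmt_14 :
    ∀ σ : ℝ, σ ≠ 0 →
      (Real.exp σ - 1) * Real.exp σ *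
          (3 * (Real.exp σ - 1) + 2 * (Real.exp σ - 1 - σ)) <
        6 * (Real.exp σ - 1 - σ) * Real.exp (2 * σ) := by
  intro σ hσ
  have hgap : 6 * (exp σ - 1 - σ) * exp (2 * σ) -
      (exp σ - 1) * exp σ * (3 * (exp σ - 1) + 2 * (exp σ - 1 - σ)) = exp σ * chiconeGap σ := by
    rw [two_mul, exp_add, chiconeGap]
    ring
  exact sub_pos.1 (hgap ▸ mul_pos (exp_pos σ) (chiconeGap_pos hσ))
end

section
/- If an area-preserving homeomorphism P of the annulus 𝕊¹ × [a,b] (preserving a finite measure with everywhere-positive density) maps a closed curve C = {(x, ψ(x)) : x ∈ 𝕊¹} (graph of a continuous function ψ with values in (a,b)) into the annulus, then P(C) ∩ C ≠ ∅. -/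
/-!
Suppose `P(C)` misses `C`. Being connected, `P(C)` lies on one side of `C`, say below it, in the
open region `L`; let `U` be the open region above `C`. A point of the top circle lies in `U` and
so does its image, and `U` is connected and disjoint from `P(C)`, so `U ⊆ P(U)`. Hence `P` maps
the closed region `K` of the annulus below `C` into itself, and even into the complement of
`closure U ⊇ C`. As `K` has finite measure and `P` preserves `ω`, `K \ P(K)` is null, so the open
set `interior K \ P(K)` is empty and `P(K) ⊇ closure (interior K) ⊇ C`: a contradiction.
-/

open MeasureTheory Set
open scoped ENNReal

theorem MeasureTheory.Measure.IsOpenPosMeasure.withDensity {α : Type*} [TopologicalSpace α]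
    [MeasurableSpace α] {μ : Measure α} [μ.IsOpenPosMeasure] {f : α → ℝ≥0∞}
    (hf : AEMeasurable f μ) (hpos : ∀ x, f x ≠ 0) : (μ.withDensity f).IsOpenPosMeasure := by
  refine ⟨fun U hU hne hzero => hU.measure_ne_zero μ hne ?_⟩
  rwa [withDensity_apply_eq_zero' hf, show {x | f x ≠ 0} = univ from eq_univ_of_forall hpos,
    univ_inter] at hzero

namespace Homeomorph

variable {X : Type*} [TopologicalSpace X]

theorem closure_interior_subset_image_of_image_subset [MeasurableSpace X]
    [OpensMeasurableSpace X] (μ : Measure X) [μ.IsOpenPosMeasure] (P : X ≃ₜ X)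
    (hP : ∀ S, MeasurableSet S → μ (P ⁻¹' S) = μ S) {K : Set X} (hK : IsClosed K)
    (hKfin : μ K ≠ ∞) (hPK : P '' K ⊆ K) : closure (interior K) ⊆ P '' K := by
  have hPKc : IsClosed (P '' K) := P.isClosedMap K hK
  have hμ : μ (P '' K) = μ K := by rw [← hP _ hPKc.measurableSet, P.preimage_image]
  have hnull : μ (K \ P '' K) = 0 := by
    rw [measure_sdiff hPK hPKc.measurableSet.nullMeasurableSet (hμ ▸ hKfin), hμ, tsub_self]
  have hempty : interior K \ P '' K = ∅ :=
    ((isOpen_interior.sdiff hPKc).measure_eq_zero_iff μ).mp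
      (measure_mono_null (sdiff_subset_sdiff_left interior_subset) hnull)
  exact closure_minimal (sdiff_eq_empty.mp hempty) hPKc

theorem disjoint_image_compl_closure (P : X ≃ₜ X) {L U : Set X} (hL : IsOpen L) (hU : IsOpen U)
    (hUc : IsPreconnected U) (hLU : Disjoint L U) (hsep : P '' (L ∪ U)ᶜ ⊆ L)
    (hfix : ∃ z ∈ U, P z ∈ U) : Disjoint (P '' Uᶜ) (closure U) := by
  have hPLU : Disjoint (P '' L) (P '' U) := (disjoint_image_iff P.injective).mpr hLU
  have hcover : U ⊆ P '' L ∪ P '' U := by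
    intro z hz
    by_contra h
    rw [← image_union, ← mem_compl_iff, ← P.image_compl] at h
    exact disjoint_left.mp hLU (hsep h) hz
  have hUsub : U ⊆ P '' U := by
    refine (hUc.subset_or_subset (P.isOpenMap L hL) (P.isOpenMap U hU) hPLU hcover).resolve_left ?_
    obtain ⟨z, hz, hPz⟩ := hfix
    exact fun h => disjoint_left.mp hPLU (h hPz) (mem_image_of_mem P hz)
  have hPL : Disjoint (P '' L) (closure U) :=
    (hPLU.closure_right (P.isOpenMap L hL)).mono_right (closure_mono hUsub)
  refine Disjoint.mono_left ?_ (disjoint_union_left.mpr ⟨hPL, hLU.closure_right hL⟩)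
  rintro _ ⟨z, hz, rfl⟩
  by_cases hzL : z ∈ L
  · exact Or.inl (mem_image_of_mem P hzL)
  · exact Or.inr (hsep ⟨z, by simp [hzL, hz], rfl⟩)

theorem disjoint_closure_closure_interior [MeasurableSpace X] [OpensMeasurableSpace X]
    (μ : Measure X) [μ.IsOpenPosMeasure] (P : X ≃ₜ X)
    (hP : ∀ S, MeasurableSet S → μ (P ⁻¹' S) = μ S) {A : Set X} (hA : IsClosed A)
    (hAfin : μ A ≠ ∞) (hPA : P '' A ⊆ A) {L U : Set X} (hL : IsOpen L) (hU : IsOpen U)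
    (hUc : IsPreconnected U) (hLU : Disjoint L U) (hsep : P '' (L ∪ U)ᶜ ⊆ L)
    (hfix : ∃ z ∈ U, P z ∈ U) : Disjoint (closure U) (closure (interior (Uᶜ ∩ A))) := by
  have htrap := P.disjoint_image_compl_closure hL hU hUc hLU hsep hfix
  have hPK : P '' (Uᶜ ∩ A) ⊆ Uᶜ ∩ A := fun z hz =>
    ⟨fun hzU => disjoint_left.mp htrap (image_mono inter_subset_left hz) (subset_closure hzU),
      hPA (image_mono inter_subset_right hz)⟩
  have hK := P.closure_interior_subset_image_of_image_subset μ hP (hU.isClosed_compl.inter hA)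
    (measure_ne_top_of_subset inter_subset_right hAfin) hPK
  exact htrap.symm.mono_right (hK.trans (image_mono inter_subset_left))

end Homeomorph

theorem isPreconnected_preimage_sub_comp_fst {Y : Type*} [TopologicalSpace Y]
    [PreconnectedSpace Y] {f : Y → ℝ} (hf : Continuous f) {I : Set ℝ} (hI : IsPreconnected I) :
    IsPreconnected ((fun z : Y × ℝ => z.2 - f z.1) ⁻¹' I) := by
  have himage : (fun z : Y × ℝ => z.2 - f z.1) ⁻¹' I =
      (fun p : Y × ℝ => (p.1, p.2 + f p.1)) '' (univ ×ˢ I) := by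
    ext z
    constructor
    · exact fun hz => ⟨(z.1, z.2 - f z.1), ⟨trivial, hz⟩, by simp⟩
    · rintro ⟨p, ⟨-, hp⟩, rfl⟩
      simpa using hp
  rw [himage]
  exact (isPreconnected_univ.prod hI).image _ (by fun_prop : Continuous _).continuousOn

/-- `I` and `J` stand for `Ioi 0` and `Iio 0` in either order, so that one lemma handles both
sides of the curve. -/
theorem Homeomorph.not_image_graph_subset_side {Y : Type*} [TopologicalSpace Y] [ConnectedSpace Y]
    [MeasurableSpace (Y × ℝ)] [OpensMeasurableSpace (Y × ℝ)] (μ : Measure (Y × ℝ))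
    [μ.IsOpenPosMeasure] (P : (Y × ℝ) ≃ₜ (Y × ℝ)) (hP : ∀ S, MeasurableSet S → μ (P ⁻¹' S) = μ S)
    {a b : ℝ} (hPA : P '' {z | z.2 ∈ Icc a b} ⊆ {z | z.2 ∈ Icc a b})
    (hAfin : μ {z | z.2 ∈ Icc a b} ≠ ∞) {ψ : Y → ℝ} (hψ : Continuous ψ)
    (hψmem : ∀ x, ψ x ∈ Ioo a b) {I J : Set ℝ} (hI : IsOpen I) (hIc : IsPreconnected I)
    (hJ : IsOpen J) (hIJ : Disjoint I J) (hIJ0 : J ∪ I = {0}ᶜ) (hI0 : (0 : ℝ) ∈ closure I)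
    (hJ0 : (0 : ℝ) ∈ closure J) {e : ℝ} (he : ∀ x, e - ψ x ∈ I)
    (hPe : P '' {z | z.2 = e} ⊆ {z | z.2 = e}) :
    ¬ P '' ((fun z : Y × ℝ => z.2 - ψ z.1) ⁻¹' {0}) ⊆ (fun z => z.2 - ψ z.1) ⁻¹' J := by
  intro hPC
  set g : Y × ℝ → ℝ := fun z => z.2 - ψ z.1 with hg_def
  have hg : Continuous g := by fun_prop
  obtain ⟨x₀⟩ := ‹ConnectedSpace Y›.toNonempty
  have hfix : ∃ z ∈ g ⁻¹' I, P z ∈ g ⁻¹' I := by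
    refine ⟨(x₀, e), he x₀, ?_⟩
    have hPz : (P (x₀, e)).2 = e := hPe (mem_image_of_mem P rfl)
    simpa [hg_def, hPz] using he (P (x₀, e)).1
  have hsep : P '' (g ⁻¹' J ∪ g ⁻¹' I)ᶜ ⊆ g ⁻¹' J := by
    rwa [← preimage_union, ← preimage_compl, hIJ0, compl_compl]
  have hdisj := P.disjoint_closure_closure_interior μ hP (isClosed_Icc.preimage continuous_snd)
    hAfin hPA (hJ.preimage hg) (hI.preimage hg) (isPreconnected_preimage_sub_comp_fst hψ hIc)
    (hIJ.symm.preimage g) hsep hfix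
  set h : ℝ → Y × ℝ := fun t => (x₀, ψ x₀ + t)
  have hh : Continuous h := by fun_prop
  have hgh : ∀ t, g (h t) = t := fun t => by simp [hg_def, h]
  have hcU : h 0 ∈ closure (g ⁻¹' I) :=
    map_mem_closure hh hI0 fun t ht => by simpa [mem_preimage, hgh] using ht
  have hint : g ⁻¹' J ∩ {z | z.2 ∈ Ioo a b} ⊆ interior ((g ⁻¹' I)ᶜ ∩ {z | z.2 ∈ Icc a b}) := by
    refine interior_maximal ?_ ((hJ.preimage hg).inter (isOpen_Ioo.preimage continuous_snd))
    exact fun z ⟨hzJ, hz⟩ => ⟨fun hzI => disjoint_left.mp hIJ hzI hzJ, Ioo_subset_Icc_self hz⟩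
  have h0 : (0 : ℝ) ∈ Ioo (a - ψ x₀) (b - ψ x₀) := by
    constructor <;> linarith [(hψmem x₀).1, (hψmem x₀).2]
  have hcK : h 0 ∈ closure (interior ((g ⁻¹' I)ᶜ ∩ {z | z.2 ∈ Icc a b})) := by
    refine map_mem_closure hh (isOpen_Ioo.inter_closure ⟨h0, hJ0⟩) fun t ⟨ht, htJ⟩ => hint ?_
    refine ⟨by simpa [mem_preimage, hgh] using htJ, ?_⟩
    constructor <;> simp only [h] <;> linarith [ht.1, ht.2]
  exact disjoint_left.mp hdisj hcU hcK

theorem stmt_17_general (a b : ℝ)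
    (P : (AddCircle (1 : ℝ) × ℝ) ≃ₜ (AddCircle (1 : ℝ) × ℝ))
    (A : Set (AddCircle (1 : ℝ) × ℝ)) (hA : A = {z | z.2 ∈ Set.Icc a b})
    (hPA : ⇑P '' A = A)
    (hbda : ⇑P '' {z : AddCircle (1 : ℝ) × ℝ | z.2 = a} ⊆ {z | z.2 = a})
    (hbdb : ⇑P '' {z : AddCircle (1 : ℝ) × ℝ | z.2 = b} ⊆ {z | z.2 = b})
    (ρ : (AddCircle (1 : ℝ) × ℝ) → ℝ) (hρc : Continuous ρ)
    (hρpos : ∀ z, 0 < ρ z)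
    (ω : Measure (AddCircle (1 : ℝ) × ℝ))
    (hω : ω = volume.withDensity (fun z => ENNReal.ofReal (ρ z)))
    (hωinv : ∀ S : Set (AddCircle (1 : ℝ) × ℝ), MeasurableSet S →
      ω (⇑P ⁻¹' S) = ω S)
    (ψ : AddCircle (1 : ℝ) → ℝ) (hψ : Continuous ψ)
    (hψmem : ∀ x, ψ x ∈ Set.Ioo a b) :
    (⇑P '' {z : AddCircle (1 : ℝ) × ℝ | z.2 = ψ z.1} ∩
      {z : AddCircle (1 : ℝ) × ℝ | z.2 = ψ z.1}).Nonempty := by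
  subst hA
  have : ω.IsOpenPosMeasure := hω ▸ .withDensity (by fun_prop) fun z => by simpa using hρpos z
  have : IsLocallyFiniteMeasure ω := hω ▸ .withDensity_ofReal hρc
  have hAfin : ω {z | z.2 ∈ Icc a b} ≠ ∞ := by
    have hK := (isCompact_univ (X := AddCircle (1 : ℝ))).prod (isCompact_Icc (a := a) (b := b))
    rw [univ_prod] at hK
    exact hK.measure_lt_top.ne
  set g : AddCircle (1 : ℝ) × ℝ → ℝ := fun z => z.2 - ψ z.1 with hg_def
  have hC : {z : AddCircle (1 : ℝ) × ℝ | z.2 = ψ z.1} = g ⁻¹' {0} := by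
    ext z; simp [hg_def, sub_eq_zero]
  rw [hC, ← not_disjoint_iff_nonempty_inter]
  intro hdisj
  have hside : P '' (g ⁻¹' {0}) ⊆ g ⁻¹' Iio 0 ∪ g ⁻¹' Ioi 0 := by
    rw [← preimage_union, Iio_union_Ioi, preimage_compl]
    exact subset_compl_iff_disjoint_right.mpr hdisj
  rcases ((isPreconnected_preimage_sub_comp_fst hψ isPreconnected_singleton).image _
    P.continuous.continuousOn).subset_or_subset (isOpen_Iio.preimage (by fun_prop))
    (isOpen_Ioi.preimage (by fun_prop)) (Ioi_disjoint_Iio_same.symm.preimage g) hside with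
    hbelow | habove
  · exact P.not_image_graph_subset_side _ hωinv hPA.subset hAfin hψ hψmem isOpen_Ioi
      isPreconnected_Ioi isOpen_Iio Ioi_disjoint_Iio_same Iio_union_Ioi (by simp) (by simp)
      (fun x => sub_pos.mpr (hψmem x).2) hbdb hbelow
  · exact P.not_image_graph_subset_side _ hωinv hPA.subset hAfin hψ hψmem isOpen_Iio
      isPreconnected_Iio isOpen_Ioi Ioi_disjoint_Iio_same.symm Ioi_union_Iio (by simp) (by simp)
      (fun x => sub_neg.mpr (hψmem x).1) hbda habove

/-- Curve-intersection property: a homeomorphism P of 𝕊¹ × ℝ that maps the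
annulus A = 𝕊¹ × [a,b] onto itself, preserves each boundary circle, and
preserves a measure ω with everywhere-positive continuous density, must map
any closed curve C that is the graph of a continuous ψ : 𝕊¹ → (a,b) to a
curve meeting C. -/
theorem stmt_17 (a b : ℝ) (hab : a < b)
    (P : (AddCircle (1 : ℝ) × ℝ) ≃ₜ (AddCircle (1 : ℝ) × ℝ))
    (A : Set (AddCircle (1 : ℝ) × ℝ)) (hA : A = {z | z.2 ∈ Set.Icc a b})
    (hPA : ⇑P '' A = A)
    (hbda : ⇑P '' {z : AddCircle (1 : ℝ) × ℝ | z.2 = a} ⊆ {z | z.2 = a})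
    (hbdb : ⇑P '' {z : AddCircle (1 : ℝ) × ℝ | z.2 = b} ⊆ {z | z.2 = b})
    (ρ : (AddCircle (1 : ℝ) × ℝ) → ℝ) (hρc : Continuous ρ)
    (hρpos : ∀ z, 0 < ρ z)
    (ω : Measure (AddCircle (1 : ℝ) × ℝ))
    (hω : ω = volume.withDensity (fun z => ENNReal.ofReal (ρ z)))
    (hωinv : ∀ S : Set (AddCircle (1 : ℝ) × ℝ), MeasurableSet S →
      ω (⇑P ⁻¹' S) = ω S)
    (ψ : AddCircle (1 : ℝ) → ℝ) (hψ : Continuous ψ)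
    (hψmem : ∀ x, ψ x ∈ Set.Ioo a b) :
    (⇑P '' {z : AddCircle (1 : ℝ) × ℝ | z.2 = ψ z.1} ∩
      {z : AddCircle (1 : ℝ) × ℝ | z.2 = ψ z.1}).Nonempty :=
  stmt_17_general a b P A hA hPA hbda hbdb ρ hρc hρpos ω hω hωinv ψ hψ hψmem
end

section
/- The density ρ(q,p,ξ₁,...,ξ_M) = exp(−β[H(q,p) + Σⱼ ξⱼ²/(2Qⱼ)]) satisfies the steady-state Liouville equation div(ρf) = 0 for the Nosé-Hoover chain vector field, hence it yields an invariant measure for the Nosé-Hoover chain dynamics. -/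
-- helper: directional derivative via line
lemma dirDeriv_eq {E : Type*} [NormedAddCommGroup E] [NormedSpace ℝ E]
    {g : E → ℝ} {z v : E} {a : ℝ} (hg : DifferentiableAt ℝ g z)
    (h : HasDerivAt (fun t : ℝ => g (z + t • v)) a 0) :
    fderiv ℝ g z v = a := by
  have hline : HasDerivAt (fun t : ℝ => z + t • v) v 0 := by
    simpa using ((hasDerivAt_id (0:ℝ)).smul_const v).const_add z
  have hz : z + (0:ℝ) • v = z := by simp
  have h2 : HasDerivAt (fun t : ℝ => g (z + t • v)) (fderiv ℝ g z v) 0 := by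
    have hg' : HasFDerivAt g (fderiv ℝ g z) (z + (0:ℝ) • v) := by
      rw [hz]; exact hg.hasFDerivAt
    exact hg'.comp_hasDerivAt 0 hline
  exact (h.unique h2).symm

-- helper: trace over triple product of pi types
lemma trace_prod3 {N K : ℕ}
    (L : ((Fin N → ℝ) × (Fin N → ℝ) × (Fin K → ℝ)) →ₗ[ℝ]
      ((Fin N → ℝ) × (Fin N → ℝ) × (Fin K → ℝ))) :
    LinearMap.trace ℝ _ L =
      (∑ i, (L (Pi.single i 1, 0, 0)).1 i) +
      ((∑ i, (L (0, Pi.single i 1, 0)).2.1 i) +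
       (∑ j, (L (0, 0, Pi.single j 1)).2.2 j)) := by
  classical
  set b := (Pi.basisFun ℝ (Fin N)).prod
    (((Pi.basisFun ℝ (Fin N))).prod (Pi.basisFun ℝ (Fin K))) with hb
  rw [LinearMap.trace_eq_matrix_trace ℝ b, Matrix.trace]
  rw [Fintype.sum_sum_type]
  congr 1
  · apply Finset.sum_congr rfl
    intro i _
    rw [Matrix.diag]
    rw [LinearMap.toMatrix_apply]
    simp [hb, Module.Basis.prod_repr_inl, Module.Basis.prod_apply, Pi.basisFun_apply, Pi.basisFun_repr]
    rfl
  · rw [Fintype.sum_sum_type]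
    congr 1
    · apply Finset.sum_congr rfl
      intro i _
      rw [Matrix.diag, LinearMap.toMatrix_apply]
      simp [hb, Module.Basis.prod_repr_inr, Module.Basis.prod_repr_inl, Module.Basis.prod_apply, Pi.basisFun_apply,
        Pi.basisFun_repr]
    · apply Finset.sum_congr rfl
      intro j _
      rw [Matrix.diag, LinearMap.toMatrix_apply]
      simp [hb, Module.Basis.prod_repr_inr, Module.Basis.prod_apply, Pi.basisFun_apply, Pi.basisFun_repr]

-- helper: coordinate of fderiv
lemma fderiv_clm_comp_apply {E F : Type*} [NormedAddCommGroup E] [NormedSpace ℝ E]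
    [NormedAddCommGroup F] [NormedSpace ℝ F]
    (π : F →L[ℝ] ℝ) {h : E → F} {z : E} (hd : DifferentiableAt ℝ h z) (v : E) :
    fderiv ℝ (fun x => π (h x)) z v = π (fderiv ℝ h z v) := by
  have h1 : fderiv ℝ (⇑π ∘ h) z = π.comp (fderiv ℝ h z) :=
    (π.hasFDerivAt.comp z hd.hasFDerivAt).fderiv
  have h2 : (fun x => π (h x)) = ⇑π ∘ h := rfl
  rw [h2, h1]; rfl

lemma fin_one_ne_zero' {K : ℕ} [NeZero K] (hK : 2 ≤ K) : (1 : Fin K) ≠ 0 := by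
  intro h
  have h1 : ((1 : Fin K) : ℕ) = 1 % K := Fin.val_one' K
  have h2 : ((0 : Fin K) : ℕ) = 0 := rfl
  rw [h] at h1
  rw [h2] at h1
  have : 1 % K = 1 := Nat.mod_eq_of_lt (by omega)
  omega

lemma fin_add_one_ne {K : ℕ} [NeZero K] (hK : 2 ≤ K) (j : Fin K) : j + 1 ≠ j := by
  intro h
  have : (1 : Fin K) = 0 := by
    have := congrArg (fun x => x - j) h
    simpa [add_comm, add_sub_cancel_right, sub_self] using this
  exact fin_one_ne_zero' hK this

lemma fin_sub_one_ne {K : ℕ} [NeZero K] (hK : 2 ≤ K) (j : Fin K) : j - 1 ≠ j := by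
  intro h
  rw [sub_eq_iff_eq_add] at h
  exact fin_add_one_ne hK j h.symm

lemma fin_val_add_one_eq_zero_iff {K : ℕ} [NeZero K] (hK : 2 ≤ K) (j : Fin K) :
    ((j + 1 : Fin K) : ℕ) = 0 ↔ (j : ℕ) = K - 1 := by
  have hj := j.isLt
  have h1 : ((j + 1 : Fin K) : ℕ) = ((j : ℕ) + 1) % K := by
    rw [Fin.add_def]
    simp [Fin.val_one' K, Nat.add_mod]
  rw [h1]
  constructor
  · intro h
    rcases (Nat.dvd_of_mod_eq_zero h) with ⟨c, hc⟩
    rcases c with _ | c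
    · omega
    · have : K * 1 ≤ K * (c+1) := Nat.mul_le_mul_left K (by omega)
      omega
  · intro h
    have : (j : ℕ) + 1 = K := by omega
    rw [this, Nat.mod_self]

lemma fin_reindex {K : ℕ} [NeZero K] (hK : 2 ≤ K) (h : Fin K → ℝ) :
    ∑ j : Fin K, (if (j : ℕ) = K - 1 then 0 else h (j + 1)) =
    ∑ j : Fin K, (if (j : ℕ) = 0 then 0 else h j) := by
  rw [← Equiv.sum_comp (Equiv.addRight (1 : Fin K))
    (fun j => if (j : ℕ) = 0 then (0:ℝ) else h j)]
  apply Finset.sum_congr rfl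
  intro j _
  have : (Equiv.addRight (1 : Fin K)) j = j + 1 := rfl
  rw [this]
  by_cases hc : (j : ℕ) = K - 1
  · rw [if_pos hc, if_pos ((fin_val_add_one_eq_zero_iff hK j).2 hc)]
  · rw [if_neg hc, if_neg (by
      intro hz; exact hc ((fin_val_add_one_eq_zero_iff hK j).1 hz))]

lemma line_hasDerivAt {E : Type*} [NormedAddCommGroup E] [NormedSpace ℝ E]
    {g : E → ℝ} {z : E} (v : E) (hg : DifferentiableAt ℝ g z) :
    HasDerivAt (fun t : ℝ => g (z + t • v)) (fderiv ℝ g z v) 0 := by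
  have hline : HasDerivAt (fun t : ℝ => z + t • v) v 0 := by
    simpa using ((hasDerivAt_id (0:ℝ)).smul_const v).const_add z
  have hz : z + (0:ℝ) • v = z := by simp
  have hg' : HasFDerivAt g (fderiv ℝ g z) (z + (0:ℝ) • v) := by
    rw [hz]; exact hg.hasFDerivAt
  exact hg'.comp_hasDerivAt 0 hline

lemma hasDerivAt_sq_sum_single {N : ℕ} (p c : Fin N → ℝ) (i : Fin N) :
    HasDerivAt (fun t : ℝ => ∑ l, (p l + t * Pi.single (M := fun _ => ℝ) i 1 l) ^ 2 / c l)
      (2 * p i / c i) 0 := by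
  classical
  have key : ∀ l ∈ Finset.univ,
      HasDerivAt (fun t : ℝ => (p l + t * Pi.single (M := fun _ => ℝ) i 1 l) ^ 2 / c l)
        ((2 * p l / c l) * Pi.single (M := fun _ => ℝ) i 1 l) 0 := by
    intro l _
    have h1 : HasDerivAt (fun t : ℝ => p l + t * Pi.single (M := fun _ => ℝ) i 1 l)
        (Pi.single (M := fun _ => ℝ) i 1 l) 0 :=
      (hasDerivAt_mul_const _).const_add (p l)
    have h2 := (h1.pow 2).div_const (c l)
    refine h2.congr_deriv ?_
    simp; ring
  have h := HasDerivAt.fun_sum key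
  refine h.congr_deriv ?_
  have hs : ∀ l, (2 * p l / c l) * Pi.single (M := fun _ => ℝ) i 1 l
      = if l = i then 2 * p l / c l else 0 := by
    intro l
    rcases eq_or_ne l i with h | h
    · subst h; simp
    · simp [Pi.single_eq_of_ne h, h]
  simp_rw [hs]
  simp
set_option maxHeartbeats 1000000 in
/-- The density ρ(q,p,ξ) = exp(−β[H(q,p) + Σⱼ ξⱼ²/(2Qⱼ)]) satisfies the
steady-state Liouville equation div(ρ f) = 0 for the Nosé-Hoover chain vector
field with Mext ≥ 2 thermostats; the divergence is expressed as the trace of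
the total derivative of ρ • f. -/
theorem stmt_18 (n M Mext : ℕ) [NeZero Mext] (hMext : 2 ≤ Mext)
    (β : ℝ) (hβ : 0 < β)
    (m : Fin (n * M) → ℝ) (hm : ∀ i, 0 < m i)
    (Q : Fin Mext → ℝ) (hQ : ∀ j, 0 < Q j)
    (V : (Fin (n * M) → ℝ) → ℝ) (hV : ContDiff ℝ (⊤ : ℕ∞) V)
    (f ρf : ((Fin (n * M) → ℝ) × (Fin (n * M) → ℝ) × (Fin Mext → ℝ)) →
      ((Fin (n * M) → ℝ) × (Fin (n * M) → ℝ) × (Fin Mext → ℝ)))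
    (ρ : ((Fin (n * M) → ℝ) × (Fin (n * M) → ℝ) × (Fin Mext → ℝ)) → ℝ)
    (hf : ∀ z, f z =
      (fun i => z.2.1 i / m i,
       fun i => -(fderiv ℝ V z.1 (Pi.single i 1)) - z.2.2 0 / Q 0 * z.2.1 i,
       fun (j : Fin Mext) =>
         if (j : ℕ) = 0 then
           ((∑ i, (z.2.1 i) ^ 2 / m i) - (n * M : ℝ) / β)
             - z.2.2 (j + 1 : Fin Mext) / Q (j + 1 : Fin Mext) * z.2.2 j
         else if (j : ℕ) = Mext - 1 then
           (z.2.2 (j - 1 : Fin Mext)) ^ 2 / Q (j - 1 : Fin Mext) - 1 / β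
         else
           ((z.2.2 (j - 1 : Fin Mext)) ^ 2 / Q (j - 1 : Fin Mext) - 1 / β)
             - z.2.2 (j + 1 : Fin Mext) / Q (j + 1 : Fin Mext) * z.2.2 j))
    (hρ : ∀ z, ρ z = Real.exp (-β *
      (((∑ i, (z.2.1 i) ^ 2 / (2 * m i)) + V z.1)
        + ∑ j, (z.2.2 j) ^ 2 / (2 * Q j))))
    (hρf : ∀ z, ρf z = ρ z • f z) :
    ∀ z, LinearMap.trace ℝ
      ((Fin (n * M) → ℝ) × (Fin (n * M) → ℝ) × (Fin Mext → ℝ))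
      (fderiv ℝ ρf z :
        ((Fin (n * M) → ℝ) × (Fin (n * M) → ℝ) × (Fin Mext → ℝ)) →ₗ[ℝ]
        ((Fin (n * M) → ℝ) × (Fin (n * M) → ℝ) × (Fin Mext → ℝ))) = 0 := by
  classical
  have hβ' : β ≠ 0 := ne_of_gt hβ
  have hfE : f = _ := funext hf
  have hρE : ρ = _ := funext hρ
  have hρfE : ρf = _ := funext hρf
  subst hρfE hfE hρE
  have hVd : Differentiable ℝ V := hV.differentiable (by simp)
  have hDV : Differentiable ℝ (fderiv ℝ V) :=
    (hV.fderiv_right (m := 1) (by norm_cast)).differentiable one_ne_zero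
  have hDVi : ∀ (i : Fin (n*M)),
      Differentiable ℝ (fun x : ((Fin (n * M) → ℝ) × (Fin (n * M) → ℝ) × (Fin Mext → ℝ)) =>
        fderiv ℝ V x.1 (Pi.single i 1)) :=
    fun i => (hDV.comp differentiable_fst).clm_apply (differentiable_const _)
  have hρd : Differentiable ℝ
      (fun z : ((Fin (n * M) → ℝ) × (Fin (n * M) → ℝ) × (Fin Mext → ℝ)) =>
        Real.exp (-β * (((∑ i, (z.2.1 i) ^ 2 / (2 * m i)) + V z.1)
          + ∑ j, (z.2.2 j) ^ 2 / (2 * Q j)))) := by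
    fun_prop
  have hfd : Differentiable ℝ
      (fun z : ((Fin (n * M) → ℝ) × (Fin (n * M) → ℝ) × (Fin Mext → ℝ)) =>
        ((fun i => z.2.1 i / m i,
         fun i => -(fderiv ℝ V z.1 (Pi.single i 1)) - z.2.2 0 / Q 0 * z.2.1 i,
         fun (j : Fin Mext) =>
           if (j : ℕ) = 0 then
             ((∑ i, (z.2.1 i) ^ 2 / m i) - (n * M : ℝ) / β)
               - z.2.2 (j + 1 : Fin Mext) / Q (j + 1 : Fin Mext) * z.2.2 j
           else if (j : ℕ) = Mext - 1 then
             (z.2.2 (j - 1 : Fin Mext)) ^ 2 / Q (j - 1 : Fin Mext) - 1 / β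
           else
             ((z.2.2 (j - 1 : Fin Mext)) ^ 2 / Q (j - 1 : Fin Mext) - 1 / β)
               - z.2.2 (j + 1 : Fin Mext) / Q (j + 1 : Fin Mext) * z.2.2 j) :
          ((Fin (n * M) → ℝ) × (Fin (n * M) → ℝ) × (Fin Mext → ℝ)))) := by
    apply Differentiable.prodMk
    · rw [differentiable_pi]; intro i; fun_prop
    apply Differentiable.prodMk
    · rw [differentiable_pi]; intro i
      have h := hDVi i
      fun_prop
    · rw [differentiable_pi]; intro j
      by_cases hj0 : (j : ℕ) = 0
      · simp only [if_pos hj0]; fun_prop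
      · simp only [if_neg hj0]
        by_cases hjl : (j : ℕ) = Mext - 1
        · simp only [if_pos hjl]; fun_prop
        · simp only [if_neg hjl]; fun_prop
  intro z
  beta_reduce
  rw [trace_prod3]
  simp only [ContinuousLinearMap.coe_coe]

  -- coordinate extraction lemmas
  have hFd' : Differentiable ℝ (fun x : ((Fin (n * M) → ℝ) × (Fin (n * M) → ℝ) × (Fin Mext → ℝ)) => Real.exp (-β * (((∑ i, (x.2.1 i) ^ 2 / (2 * m i)) + V x.1) + ∑ j, (x.2.2 j) ^ 2 / (2 * Q j))) • ((fun i => x.2.1 i / m i, fun i => -(fderiv ℝ V x.1 (Pi.single i 1)) - x.2.2 0 / Q 0 * x.2.1 i, fun (j : Fin Mext) => if (j : ℕ) = 0 then ((∑ i, (x.2.1 i) ^ 2 / m i) - (n * M : ℝ) / β) - x.2.2 (j + 1 : Fin Mext) / Q (j + 1 : Fin Mext) * x.2.2 j else if (j : ℕ) = Mext - 1 then (x.2.2 (j - 1 : Fin Mext)) ^ 2 / Q (j - 1 : Fin Mext) - 1 / β else ((x.2.2 (j - 1 : Fin Mext)) ^ 2 / Q (j - 1 : Fin Mext) - 1 /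 β) - x.2.2 (j + 1 : Fin Mext) / Q (j + 1 : Fin Mext) * x.2.2 j) : ((Fin (n * M) → ℝ) × (Fin (n * M) → ℝ) × (Fin Mext → ℝ)))) := hρd.smul hfd
  have hcoord1 : ∀ (v : ((Fin (n * M) → ℝ) × (Fin (n * M) → ℝ) × (Fin Mext → ℝ))) (i : Fin (n * M)),
      (fderiv ℝ (fun x : ((Fin (n * M) → ℝ) × (Fin (n * M) → ℝ) × (Fin Mext → ℝ)) => Real.exp (-β * (((∑ i, (x.2.1 i) ^ 2 / (2 * m i)) + V x.1) + ∑ j, (x.2.2 j) ^ 2 / (2 * Q j))) • ((fun i => x.2.1 i / m i, fun i => -(fderiv ℝ V x.1 (Pi.single i 1)) - x.2.2 0 / Q 0 * x.2.1 i, fun (j : Fin Mext) => if (j : ℕ) = 0 then ((∑ i, (x.2.1 i) ^ 2 / m i) - (n * M : ℝ) / β) - x.2.2 (j + 1 : Fin Mext) / Q (j + 1 : Fin Mext) * x.2.2 j else if (j : ℕ) = Mext - 1 then (x.2.2 (j - 1 : Fin Mext)) ^ 2 / Q (j - 1 : Fin Mext) - 1 / β else ((x.2.2 (j - 1 : Fin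 Mext)) ^ 2 / Q (j - 1 : Fin Mext) - 1 / β) - x.2.2 (j + 1 : Fin Mext) / Q (j + 1 : Fin Mext) * x.2.2 j) : ((Fin (n * M) → ℝ) × (Fin (n * M) → ℝ) × (Fin Mext → ℝ)))) z v).1 i = fderiv ℝ (fun x : ((Fin (n * M) → ℝ) × (Fin (n * M) → ℝ) × (Fin Mext → ℝ)) => ((fun x : ((Fin (n * M) → ℝ) × (Fin (n * M) → ℝ) × (Fin Mext → ℝ)) => Real.exp (-β * (((∑ i, (x.2.1 i) ^ 2 / (2 * m i)) + V x.1) + ∑ j, (x.2.2 j) ^ 2 / (2 * Q j))) • ((fun i => x.2.1 i / m i, fun i => -(fderiv ℝ V x.1 (Pi.single i 1)) - x.2.2 0 / Q 0 * x.2.1 i, fun (j : Fin Mext) => if (j : ℕ) = 0 then ((∑ i, (x.2.1 i) ^ 2 / m i) - (n * M : ℝ) / β) - x.2.2 (j + 1 : Fin Mext) / Q (j + 1 : Fin Mext) * x.2.2 j else if (j : ℕ) = Mext - 1 then (x.2.2 (j - 1 : Fin Mext)) ^ 2 / Q (j - 1 : Fin Mext) - 1 / β else ((x.2.2 (j - 1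 : Fin Mext)) ^ 2 / Q (j - 1 : Fin Mext) - 1 / β) - x.2.2 (j + 1 : Fin Mext) / Q (j + 1 : Fin Mext) * x.2.2 j) : ((Fin (n * M) → ℝ) × (Fin (n * M) → ℝ) × (Fin Mext → ℝ)))) x).1 i) z v := by
    intro v i
    exact (fderiv_clm_comp_apply ((ContinuousLinearMap.proj i).comp
      (ContinuousLinearMap.fst ℝ _ _)) hFd'.differentiableAt v).symm
  have hcoord2 : ∀ (v : ((Fin (n * M) → ℝ) × (Fin (n * M) → ℝ) × (Fin Mext → ℝ))) (i : Fin (n * M)),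
      (fderiv ℝ (fun x : ((Fin (n * M) → ℝ) × (Fin (n * M) → ℝ) × (Fin Mext → ℝ)) => Real.exp (-β * (((∑ i, (x.2.1 i) ^ 2 / (2 * m i)) + V x.1) + ∑ j, (x.2.2 j) ^ 2 / (2 * Q j))) • ((fun i => x.2.1 i / m i, fun i => -(fderiv ℝ V x.1 (Pi.single i 1)) - x.2.2 0 / Q 0 * x.2.1 i, fun (j : Fin Mext) => if (j : ℕ) = 0 then ((∑ i, (x.2.1 i) ^ 2 / m i) - (n * M : ℝ) / β) - x.2.2 (j + 1 : Fin Mext) / Q (j + 1 : Fin Mext) * x.2.2 j else if (j : ℕ) = Mext - 1 then (x.2.2 (j - 1 : Fin Mext)) ^ 2 / Q (j - 1 : Fin Mext) - 1 / β else ((x.2.2 (j - 1 : Fin Mext)) ^ 2 / Q (j - 1 : Fin Mext) - 1 / β) - x.2.2 (j + 1 : Fin Mext) / Q (j + 1 : Fin Mext) * x.2.2 j) : ((Fin (n * M) → ℝ) × (Fin (n * M) → ℝ) × (Fin Mext → ℝ)))) z v).2.1 i = fderiv ℝ (fun x : ((Fin (n * M) → ℝ) × (Fin (n * M) → ℝ)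 × (Fin Mext → ℝ)) => ((fun x : ((Fin (n * M) → ℝ) × (Fin (n * M) → ℝ) × (Fin Mext → ℝ)) => Real.exp (-β * (((∑ i, (x.2.1 i) ^ 2 / (2 * m i)) + V x.1) + ∑ j, (x.2.2 j) ^ 2 / (2 * Q j))) • ((fun i => x.2.1 i / m i, fun i => -(fderiv ℝ V x.1 (Pi.single i 1)) - x.2.2 0 / Q 0 * x.2.1 i, fun (j : Fin Mext) => if (j : ℕ) = 0 then ((∑ i, (x.2.1 i) ^ 2 / m i) - (n * M : ℝ) / β) - x.2.2 (j + 1 : Fin Mext) / Q (j + 1 : Fin Mext) * x.2.2 j else if (j : ℕ) = Mext - 1 then (x.2.2 (j - 1 : Fin Mext)) ^ 2 / Q (j - 1 : Fin Mext) - 1 / β else ((x.2.2 (j - 1 : Fin Mext)) ^ 2 / Q (j - 1 : Fin Mext) - 1 / β) - x.2.2 (j + 1 : Fin Mext) / Q (j + 1 : Fin Mext) * x.2.2 j) : ((Fin (n * M) → ℝ) × (Fin (n * M) → ℝ) × (Fin Mext → ℝ)))) x).2.1 i) z v := by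
    intro v i
    exact (fderiv_clm_comp_apply ((ContinuousLinearMap.proj i).comp
      ((ContinuousLinearMap.fst ℝ _ _).comp (ContinuousLinearMap.snd ℝ _ _)))
      hFd'.differentiableAt v).symm
  have hcoord3 : ∀ (v : ((Fin (n * M) → ℝ) × (Fin (n * M) → ℝ) × (Fin Mext → ℝ))) (j : Fin Mext),
      (fderiv ℝ (fun x : ((Fin (n * M) → ℝ) × (Fin (n * M) → ℝ) × (Fin Mext → ℝ)) => Real.exp (-β * (((∑ i, (x.2.1 i) ^ 2 / (2 * m i)) + V x.1) + ∑ j, (x.2.2 j) ^ 2 / (2 * Q j))) • ((fun i => x.2.1 i / m i, fun i => -(fderiv ℝ V x.1 (Pi.single i 1)) - x.2.2 0 / Q 0 * x.2.1 i, fun (j : Fin Mext) => if (j : ℕ) = 0 then ((∑ i, (x.2.1 i) ^ 2 / m i) - (n * M : ℝ) / β) - x.2.2 (j + 1 : Fin Mext) / Q (j + 1 : Fin Mext) * x.2.2 j else if (j : ℕ) = Mext - 1 then (x.2.2 (j - 1 : Fin Mext)) ^ 2 / Q (j - 1 : Fin Mext) - 1 / β else ((x.2.2 (j - 1 : Fin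 Mext)) ^ 2 / Q (j - 1 : Fin Mext) - 1 / β) - x.2.2 (j + 1 : Fin Mext) / Q (j + 1 : Fin Mext) * x.2.2 j) : ((Fin (n * M) → ℝ) × (Fin (n * M) → ℝ) × (Fin Mext → ℝ)))) z v).2.2 j = fderiv ℝ (fun x : ((Fin (n * M) → ℝ) × (Fin (n * M) → ℝ) × (Fin Mext → ℝ)) => ((fun x : ((Fin (n * M) → ℝ) × (Fin (n * M) → ℝ) × (Fin Mext → ℝ)) => Real.exp (-β * (((∑ i, (x.2.1 i) ^ 2 / (2 * m i)) + V x.1) + ∑ j, (x.2.2 j) ^ 2 / (2 * Q j))) • ((fun i => x.2.1 i / m i, fun i => -(fderiv ℝ V x.1 (Pi.single i 1)) - x.2.2 0 / Q 0 * x.2.1 i, fun (j : Fin Mext) => if (j : ℕ) = 0 then ((∑ i, (x.2.1 i) ^ 2 / m i) - (n * M : ℝ) / β) - x.2.2 (j + 1 : Fin Mext) / Q (j + 1 : Fin Mext) * x.2.2 j else if (j : ℕ) = Mext - 1 then (x.2.2 (j - 1 : Fin Mext)) ^ 2 / Q (j - 1 : Fin Mext) - 1 / β else ((x.2.2 (j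 - 1 : Fin Mext)) ^ 2 / Q (j - 1 : Fin Mext) - 1 / β) - x.2.2 (j + 1 : Fin Mext) / Q (j + 1 : Fin Mext) * x.2.2 j) : ((Fin (n * M) → ℝ) × (Fin (n * M) → ℝ) × (Fin Mext → ℝ)))) x).2.2 j) z v := by
    intro v j
    exact (fderiv_clm_comp_apply ((ContinuousLinearMap.proj j).comp
      ((ContinuousLinearMap.snd ℝ _ _).comp (ContinuousLinearMap.snd ℝ _ _)))
      hFd'.differentiableAt v).symm
  -- entry computations
  have e1 : ∀ i : Fin (n * M),
      fderiv ℝ (fun x : ((Fin (n * M) → ℝ) × (Fin (n * M) → ℝ) × (Fin Mext → ℝ)) => ((fun x : ((Fin (n * M) → ℝ) × (Fin (n * M) → ℝ) × (Fin Mext → ℝ)) => Real.exp (-β * (((∑ i, (x.2.1 i) ^ 2 / (2 * m i)) + V x.1) + ∑ j, (x.2.2 j) ^ 2 / (2 * Q j))) • ((fun i => x.2.1 i / m i, fun i => -(fderiv ℝ V x.1 (Pi.single i 1)) - x.2.2 0 / Q 0 * x.2.1 i, fun (j : Fin Mext) => if (j : ℕ) = 0 then ((∑ i, (x.2.1 i)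 ^ 2 / m i) - (n * M : ℝ) / β) - x.2.2 (j + 1 : Fin Mext) / Q (j + 1 : Fin Mext) * x.2.2 j else if (j : ℕ) = Mext - 1 then (x.2.2 (j - 1 : Fin Mext)) ^ 2 / Q (j - 1 : Fin Mext) - 1 / β else ((x.2.2 (j - 1 : Fin Mext)) ^ 2 / Q (j - 1 : Fin Mext) - 1 / β) - x.2.2 (j + 1 : Fin Mext) / Q (j + 1 : Fin Mext) * x.2.2 j) : ((Fin (n * M) → ℝ) × (Fin (n * M) → ℝ) × (Fin Mext → ℝ)))) x).1 i) z
        ((Pi.single i 1 : Fin (n * M) → ℝ), (0 : Fin (n * M) → ℝ), (0 : Fin Mext → ℝ)) =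
      Real.exp (-β * (((∑ i, (z.2.1 i) ^ 2 / (2 * m i)) + V z.1) + ∑ j, (z.2.2 j) ^ 2 / (2 * Q j))) * (-β * (fderiv ℝ V z.1 (Pi.single i 1)) * (z.2.1 i / m i)) := by
    intro i
    apply dirDeriv_eq
    · exact ((((ContinuousLinearMap.proj i).comp (ContinuousLinearMap.fst ℝ _ _)).differentiable).comp
        hFd').differentiableAt
    · have hfun : (fun t : ℝ => ((fun x : ((Fin (n * M) → ℝ) × (Fin (n * M) → ℝ) × (Fin Mext → ℝ)) => Real.exp (-β * (((∑ i, (x.2.1 i) ^ 2 / (2 * m i)) + V x.1) + ∑ j, (x.2.2 j) ^ 2 / (2 * Q j))) • ((fun i => x.2.1 i / m i, fun i => -(fderiv ℝ V x.1 (Pi.single i 1)) - x.2.2 0 / Q 0 * x.2.1 i, fun (j : Fin Mext) => if (j : ℕ) = 0 then ((∑ i, (x.2.1 i) ^ 2 / m i) - (n * M : ℝ) / β) - x.2.2 (j + 1 : Fin Mext) / Q (j + 1 : Fin Mext) * x.2.2 j else if (j : ℕ) = Mext - 1 then (x.2.2 (j - 1 : Fin Mext)) ^ 2 / Q (j - 1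 : Fin Mext) - 1 / β else ((x.2.2 (j - 1 : Fin Mext)) ^ 2 / Q (j - 1 : Fin Mext) - 1 / β) - x.2.2 (j + 1 : Fin Mext) / Q (j + 1 : Fin Mext) * x.2.2 j) : ((Fin (n * M) → ℝ) × (Fin (n * M) → ℝ) × (Fin Mext → ℝ)))) (z + t • ((Pi.single i 1 : Fin (n * M) → ℝ),
          (0 : Fin (n * M) → ℝ), (0 : Fin Mext → ℝ)))).1 i) =
          (fun t : ℝ => Real.exp (-β * (((∑ l, (z.2.1 l) ^ 2 / (2 * m l))
            + V (z.1 + t • (Pi.single i 1 : Fin (n * M) → ℝ))) + ∑ j, (z.2.2 j) ^ 2 / (2 * Q j))) * (z.2.1 i / m i)) := by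
        funext t
        simp [Prod.fst_add, Prod.snd_add, Prod.smul_fst, Prod.smul_snd,
          Prod.smul_mk, smul_zero, add_zero, Pi.add_apply, Pi.smul_apply, smul_eq_mul]
      rw [hfun]
      have h1 : HasDerivAt (fun t : ℝ => V (z.1 + t • (Pi.single i 1 : Fin (n * M) → ℝ)))
          (fderiv ℝ V z.1 (Pi.single i 1)) 0 := line_hasDerivAt _ hVd.differentiableAt
      have h2 := ((((h1.const_add (∑ l, (z.2.1 l) ^ 2 / (2 * m l))).add_const
        (∑ j, (z.2.2 j) ^ 2 / (2 * Q j))).const_mul (-β)).exp).mul_const (z.2.1 i / m i)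
      refine h2.congr_deriv ?_
      simp only [zero_smul, zero_mul, add_zero, mul_one, mul_assoc]
      try ring
  have e2 : ∀ i : Fin (n * M),
      fderiv ℝ (fun x : ((Fin (n * M) → ℝ) × (Fin (n * M) → ℝ) × (Fin Mext → ℝ)) => ((fun x : ((Fin (n * M) → ℝ) × (Fin (n * M) → ℝ) × (Fin Mext → ℝ)) => Real.exp (-β * (((∑ i, (x.2.1 i) ^ 2 / (2 * m i)) + V x.1) + ∑ j, (x.2.2 j) ^ 2 / (2 * Q j))) • ((fun i => x.2.1 i / m i, fun i => -(fderiv ℝ V x.1 (Pi.single i 1)) - x.2.2 0 / Q 0 * x.2.1 i, fun (j : Fin Mext) => if (j : ℕ) = 0 then ((∑ i, (x.2.1 i) ^ 2 / m i) - (n * M : ℝ) / β) - x.2.2 (j + 1 : Fin Mext) / Q (j + 1 : Fin Mext) * x.2.2 j else if (j : ℕ) = Mext - 1 then (x.2.2 (j - 1 : Fin Mext)) ^ 2 / Q (j - 1 : Fin Mext) - 1 / β else ((x.2.2 (j - 1 : Fin Mext)) ^ 2 / Q (j - 1 : Fin Mext) - 1 / β) - x.2.2 (j + 1 : Fin Mext)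 / Q (j + 1 : Fin Mext) * x.2.2 j) : ((Fin (n * M) → ℝ) × (Fin (n * M) → ℝ) × (Fin Mext → ℝ)))) x).2.1 i) z
        ((0 : Fin (n * M) → ℝ), (Pi.single i 1 : Fin (n * M) → ℝ), (0 : Fin Mext → ℝ)) =
      Real.exp (-β * (((∑ i, (z.2.1 i) ^ 2 / (2 * m i)) + V z.1) + ∑ j, (z.2.2 j) ^ 2 / (2 * Q j))) * ((-β * (2 * z.2.1 i / (2 * m i))) *
        (-(fderiv ℝ V z.1 (Pi.single i 1)) - z.2.2 0 / Q 0 * z.2.1 i) + -(z.2.2 0 / Q 0)) := by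
    intro i
    apply dirDeriv_eq
    · have hd1 := hDVi i
      have : DifferentiableAt ℝ (fun x : ((Fin (n * M) → ℝ) × (Fin (n * M) → ℝ) × (Fin Mext → ℝ)) =>
          -(fderiv ℝ V x.1 (Pi.single i 1)) - x.2.2 0 / Q 0 * x.2.1 i) z := by fun_prop
      exact (hρd.differentiableAt.mul this)
    · have hfun : (fun t : ℝ => ((fun x : ((Fin (n * M) → ℝ) × (Fin (n * M) → ℝ) × (Fin Mext → ℝ)) => Real.exp (-β * (((∑ i, (x.2.1 i) ^ 2 / (2 * m i)) + V x.1) + ∑ j, (x.2.2 j) ^ 2 / (2 * Q j))) • ((fun i => x.2.1 i / m i, fun i => -(fderiv ℝ V x.1 (Pi.single i 1)) - x.2.2 0 / Q 0 * x.2.1 i, fun (j : Fin Mext) => if (j : ℕ) = 0 then ((∑ i, (x.2.1 i) ^ 2 / m i) - (n * M : ℝ) / β) - x.2.2 (j + 1 : Fin Mext) / Q (j + 1 : Fin Mext) * x.2.2 j else if (j : ℕ) = Mext - 1 then (x.2.2 (j - 1 : Fin Mext)) ^ 2 / Q (j - 1 : Fin Mext) - 1 / β else ((x.2.2 (j - 1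 : Fin Mext)) ^ 2 / Q (j - 1 : Fin Mext) - 1 / β) - x.2.2 (j + 1 : Fin Mext) / Q (j + 1 : Fin Mext) * x.2.2 j) : ((Fin (n * M) → ℝ) × (Fin (n * M) → ℝ) × (Fin Mext → ℝ)))) (z + t • ((0 : Fin (n * M) → ℝ),
          (Pi.single i 1 : Fin (n * M) → ℝ), (0 : Fin Mext → ℝ)))).2.1 i) =
          (fun t : ℝ => Real.exp (-β * (((∑ l, (z.2.1 l + t * Pi.single (M := fun _ => ℝ) i 1 l) ^ 2 / (2 * m l))
            + V z.1) + ∑ j, (z.2.2 j) ^ 2 / (2 * Q j))) *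
            (-(fderiv ℝ V z.1 (Pi.single i 1)) - z.2.2 0 / Q 0 * (z.2.1 i + t))) := by
        funext t
        simp [Prod.fst_add, Prod.snd_add, Prod.smul_fst, Prod.smul_snd,
          Prod.smul_mk, smul_zero, add_zero, Pi.add_apply, Pi.smul_apply, smul_eq_mul,
          Pi.single_eq_same, mul_one]
      rw [hfun]
      have h1 := (((hasDerivAt_sq_sum_single z.2.1 (fun l => 2 * m l) i).add_const
        (V z.1)).add_const (∑ j, (z.2.2 j) ^ 2 / (2 * Q j))).const_mul (-β)
      have h1e := h1.exp
      have h2 : HasDerivAt (fun t : ℝ =>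
          -(fderiv ℝ V z.1 (Pi.single i 1)) - z.2.2 0 / Q 0 * (z.2.1 i + t))
          (-(z.2.2 0 / Q 0)) 0 := by
        have := (((hasDerivAt_id (0:ℝ)).const_add (z.2.1 i)).const_mul
          (z.2.2 0 / Q 0)).const_sub (-(fderiv ℝ V z.1 (Pi.single i 1)))
        simpa using this
      have h3 := h1e.mul h2
      refine h3.congr_deriv ?_
      simp only [zero_smul, zero_mul, add_zero, mul_one, mul_assoc, mul_add]
      try ring
  have e3 : ∀ j : Fin Mext,
      fderiv ℝ (fun x : ((Fin (n * M) → ℝ) × (Fin (n * M) → ℝ) × (Fin Mext → ℝ)) => ((fun x : ((Fin (n * M) → ℝ) × (Fin (n * M) → ℝ) × (Fin Mext → ℝ)) => Real.exp (-β * (((∑ i, (x.2.1 i) ^ 2 / (2 * m i)) + V x.1) + ∑ j, (x.2.2 j) ^ 2 / (2 * Q j))) • ((fun i => x.2.1 i / m i, fun i => -(fderiv ℝ V x.1 (Pi.single i 1)) - x.2.2 0 / Q 0 * x.2.1 i, fun (j : Fin Mext) => if (j : ℕ) = 0 then ((∑ i, (x.2.1 i) ^ 2 / m i) - (n * M : ℝ)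 / β) - x.2.2 (j + 1 : Fin Mext) / Q (j + 1 : Fin Mext) * x.2.2 j else if (j : ℕ) = Mext - 1 then (x.2.2 (j - 1 : Fin Mext)) ^ 2 / Q (j - 1 : Fin Mext) - 1 / β else ((x.2.2 (j - 1 : Fin Mext)) ^ 2 / Q (j - 1 : Fin Mext) - 1 / β) - x.2.2 (j + 1 : Fin Mext) / Q (j + 1 : Fin Mext) * x.2.2 j) : ((Fin (n * M) → ℝ) × (Fin (n * M) → ℝ) × (Fin Mext → ℝ)))) x).2.2 j) z
        ((0 : Fin (n * M) → ℝ), (0 : Fin (n * M) → ℝ), (Pi.single j 1 : Fin Mext → ℝ)) =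
      Real.exp (-β * (((∑ i, (z.2.1 i) ^ 2 / (2 * m i)) + V z.1) + ∑ j, (z.2.2 j) ^ 2 / (2 * Q j))) * ((-β * (2 * z.2.2 j / (2 * Q j))) * (if ((j : Fin Mext) : ℕ) = 0 then ((∑ i, (z.2.1 i) ^ 2 / m i) - (n * M : ℝ) / β) - z.2.2 (j + 1 : Fin Mext) / Q (j + 1 : Fin Mext) * z.2.2 j else if ((j : Fin Mext) : ℕ) = Mext - 1 then (z.2.2 (j - 1 : Fin Mext)) ^ 2 / Q (j - 1 : Fin Mext) - 1 / β else ((z.2.2 (j - 1 : Fin Mext)) ^ 2 / Q (j - 1 : Fin Mext) - 1 / β) - z.2.2 (j + 1 : Fin Mext) / Q (j + 1 : Fin Mext) * z.2.2 j) + (if ((j : Fin Mext) : ℕ) = Mext - 1 then (0:ℝ) else -(z.2.2 (j + 1 : Fin Mext) / Q (j + 1 : Fin Mext)))) := by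
    intro j
    have hne1 : (j + 1 : Fin Mext) ≠ j := fin_add_one_ne hMext j
    have hne2 : (j - 1 : Fin Mext) ≠ j := fin_sub_one_ne hMext j
    have hs1 : Pi.single (M := fun _ => ℝ) j 1 (j + 1) = 0 := Pi.single_eq_of_ne hne1 _
    have hs2 : Pi.single (M := fun _ => ℝ) j 1 (j - 1) = 0 := Pi.single_eq_of_ne hne2 _
    apply dirDeriv_eq
    · exact ((((ContinuousLinearMap.proj j).comp ((ContinuousLinearMap.snd ℝ _ _).comp
        (ContinuousLinearMap.snd ℝ _ _))).differentiable).comp hFd').differentiableAt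
    · by_cases hj0 : (j : ℕ) = 0
      · have hjl : ¬((j : ℕ) = Mext - 1) := by omega
        have hfun : (fun t : ℝ => ((fun x : ((Fin (n * M) → ℝ) × (Fin (n * M) → ℝ) × (Fin Mext → ℝ)) => Real.exp (-β * (((∑ i, (x.2.1 i) ^ 2 / (2 * m i)) + V x.1) + ∑ j, (x.2.2 j) ^ 2 / (2 * Q j))) • ((fun i => x.2.1 i / m i, fun i => -(fderiv ℝ V x.1 (Pi.single i 1)) - x.2.2 0 / Q 0 * x.2.1 i, fun (j : Fin Mext) => if (j : ℕ) = 0 then ((∑ i, (x.2.1 i) ^ 2 / m i) - (n * M : ℝ) / β) - x.2.2 (j + 1 : Fin Mext) / Q (j + 1 : Fin Mext) * x.2.2 j else if (j : ℕ) = Mext - 1 then (x.2.2 (j - 1 : Fin Mext)) ^ 2 / Q (j - 1 : Fin Mext) - 1 / β else ((x.2.2 (j - 1 : Fin Mext)) ^ 2 / Q (j - 1 : Fin Mext) - 1 / β) - x.2.2 (j + 1 : Fin Mext) / Q (j + 1 : Fin Mext) * x.2.2 j) : ((Fin (n * M) → ℝ) × (Fin (n * M) → ℝ) × (Fin Mext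 → ℝ)))) (z + t • ((0 : Fin (n * M) → ℝ), (0 : Fin (n * M) → ℝ),
            (Pi.single j 1 : Fin Mext → ℝ)))).2.2 j) =
            (fun t : ℝ => Real.exp (-β * (((∑ l, (z.2.1 l) ^ 2 / (2 * m l)) + V z.1)
              + ∑ l, (z.2.2 l + t * Pi.single (M := fun _ => ℝ) j 1 l) ^ 2 / (2 * Q l))) *
              (((∑ i, (z.2.1 i) ^ 2 / m i) - (n * M : ℝ) / β)
                - z.2.2 (j + 1) / Q (j + 1) * (z.2.2 j + t))) := by
          funext t
          simp [if_pos hj0, eq_true (Fin.ext hj0 : j = 0), hs1, Prod.fst_add, Prod.snd_add, Prod.smul_fst, Prod.smul_snd,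
            Prod.smul_mk, smul_zero, add_zero, Pi.add_apply, Pi.smul_apply, smul_eq_mul,
            Pi.single_eq_same, mul_one]
        rw [hfun]
        have h1 := ((hasDerivAt_sq_sum_single z.2.2 (fun l => 2 * Q l) j).const_add
          ((∑ l, (z.2.1 l) ^ 2 / (2 * m l)) + V z.1)).const_mul (-β)
        have h1e := h1.exp
        have h2 : HasDerivAt (fun t : ℝ => ((∑ i, (z.2.1 i) ^ 2 / m i) - (n * M : ℝ) / β)
            - z.2.2 (j + 1) / Q (j + 1) * (z.2.2 j + t)) (-(z.2.2 (j + 1) / Q (j + 1))) 0 := by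
          have := (((hasDerivAt_id (0:ℝ)).const_add (z.2.2 j)).const_mul
            (z.2.2 (j + 1) / Q (j + 1))).const_sub ((∑ i, (z.2.1 i) ^ 2 / m i) - (n * M : ℝ) / β)
          simpa using this
        have h3 := h1e.mul h2
        refine h3.congr_deriv ?_
        rw [if_pos hj0, if_neg hjl]
        simp only [zero_smul, zero_mul, add_zero, mul_one, mul_assoc, mul_add]
        try ring
      · by_cases hjl : (j : ℕ) = Mext - 1
        · have hfun : (fun t : ℝ => ((fun x : ((Fin (n * M) → ℝ) × (Fin (n * M) → ℝ) × (Fin Mext → ℝ)) => Real.exp (-β * (((∑ i, (x.2.1 i) ^ 2 / (2 * m i)) + V x.1) + ∑ j, (x.2.2 j) ^ 2 / (2 * Q j))) • ((fun i => x.2.1 i / m i, fun i => -(fderiv ℝ V x.1 (Pi.single i 1)) - x.2.2 0 / Q 0 * x.2.1 i, fun (j : Fin Mext) => if (j : ℕ) = 0 then ((∑ i, (x.2.1 i) ^ 2 / m i) - (n * M : ℝ) / β) - x.2.2 (j + 1 : Fin Mext) / Q (j + 1 : Fin Mext) * x.2.2 j else if (j : ℕ) = Mext - 1 then (x.2.2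 (j - 1 : Fin Mext)) ^ 2 / Q (j - 1 : Fin Mext) - 1 / β else ((x.2.2 (j - 1 : Fin Mext)) ^ 2 / Q (j - 1 : Fin Mext) - 1 / β) - x.2.2 (j + 1 : Fin Mext) / Q (j + 1 : Fin Mext) * x.2.2 j) : ((Fin (n * M) → ℝ) × (Fin (n * M) → ℝ) × (Fin Mext → ℝ)))) (z + t • ((0 : Fin (n * M) → ℝ), (0 : Fin (n * M) → ℝ),
              (Pi.single j 1 : Fin Mext → ℝ)))).2.2 j) =
              (fun t : ℝ => Real.exp (-β * (((∑ l, (z.2.1 l) ^ 2 / (2 * m l)) + V z.1)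
                + ∑ l, (z.2.2 l + t * Pi.single (M := fun _ => ℝ) j 1 l) ^ 2 / (2 * Q l))) *
                ((z.2.2 (j - 1)) ^ 2 / Q (j - 1) - 1 / β)) := by
            funext t
            simp [if_neg hj0, (show j ≠ 0 from fun h => hj0 (by rw [h]; rfl)), if_pos hjl, hs2, Prod.fst_add, Prod.snd_add, Prod.smul_fst, Prod.smul_snd,
              Prod.smul_mk, smul_zero, add_zero, Pi.add_apply, Pi.smul_apply, smul_eq_mul,
              Pi.single_eq_same, mul_one]
          rw [hfun]
          have h1 := ((hasDerivAt_sq_sum_single z.2.2 (fun l => 2 * Q l) j).const_add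
            ((∑ l, (z.2.1 l) ^ 2 / (2 * m l)) + V z.1)).const_mul (-β)
          have h3 := h1.exp.mul_const ((z.2.2 (j - 1)) ^ 2 / Q (j - 1) - 1 / β)
          refine h3.congr_deriv ?_
          rw [if_neg hj0, if_pos hjl, if_pos hjl]
          simp only [zero_smul, zero_mul, add_zero, mul_one, mul_assoc, mul_add]
          try ring
        · have hfun : (fun t : ℝ => ((fun x : ((Fin (n * M) → ℝ) × (Fin (n * M) → ℝ) × (Fin Mext → ℝ)) => Real.exp (-β * (((∑ i, (x.2.1 i) ^ 2 / (2 * m i)) + V x.1) + ∑ j, (x.2.2 j) ^ 2 / (2 * Q j))) • ((fun i => x.2.1 i / m i, fun i => -(fderiv ℝ V x.1 (Pi.single i 1)) - x.2.2 0 / Q 0 * x.2.1 i, fun (j : Fin Mext) => if (j : ℕ) = 0 then ((∑ i, (x.2.1 i) ^ 2 / m i) - (n * M : ℝ) / β) - x.2.2 (j + 1 : Fin Mext) / Q (j + 1 : Fin Mext) * x.2.2 j else if (j : ℕ) = Mext - 1 then (x.2.2 (j - 1 : Fin Mext)) ^ 2 / Q (j - 1 : Fin Mext) - 1 / β else ((x.2.2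 (j - 1 : Fin Mext)) ^ 2 / Q (j - 1 : Fin Mext) - 1 / β) - x.2.2 (j + 1 : Fin Mext) / Q (j + 1 : Fin Mext) * x.2.2 j) : ((Fin (n * M) → ℝ) × (Fin (n * M) → ℝ) × (Fin Mext → ℝ)))) (z + t • ((0 : Fin (n * M) → ℝ), (0 : Fin (n * M) → ℝ),
              (Pi.single j 1 : Fin Mext → ℝ)))).2.2 j) =
              (fun t : ℝ => Real.exp (-β * (((∑ l, (z.2.1 l) ^ 2 / (2 * m l)) + V z.1)
                + ∑ l, (z.2.2 l + t * Pi.single (M := fun _ => ℝ) j 1 l) ^ 2 / (2 * Q l))) *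
                (((z.2.2 (j - 1)) ^ 2 / Q (j - 1) - 1 / β)
                  - z.2.2 (j + 1) / Q (j + 1) * (z.2.2 j + t))) := by
            funext t
            simp [if_neg hj0, (show j ≠ 0 from fun h => hj0 (by rw [h]; rfl)), if_neg hjl, hs1, hs2, Prod.fst_add, Prod.snd_add, Prod.smul_fst, Prod.smul_snd,
              Prod.smul_mk, smul_zero, add_zero, Pi.add_apply, Pi.smul_apply, smul_eq_mul,
              Pi.single_eq_same, mul_one]
          rw [hfun]
          have h1 := ((hasDerivAt_sq_sum_single z.2.2 (fun l => 2 * Q l) j).const_add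
            ((∑ l, (z.2.1 l) ^ 2 / (2 * m l)) + V z.1)).const_mul (-β)
          have h2 : HasDerivAt (fun t : ℝ => ((z.2.2 (j - 1)) ^ 2 / Q (j - 1) - 1 / β)
              - z.2.2 (j + 1) / Q (j + 1) * (z.2.2 j + t)) (-(z.2.2 (j + 1) / Q (j + 1))) 0 := by
            have := (((hasDerivAt_id (0:ℝ)).const_add (z.2.2 j)).const_mul
              (z.2.2 (j + 1) / Q (j + 1))).const_sub ((z.2.2 (j - 1)) ^ 2 / Q (j - 1) - 1 / β)
            simpa using this
          have h3 := h1.exp.mul h2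
          refine h3.congr_deriv ?_
          rw [if_neg hj0, if_neg hjl, if_neg hjl]
          simp only [zero_smul, zero_mul, add_zero, mul_one, mul_assoc, mul_add]
          try ring
  have h2ne : (2:ℝ) ≠ 0 := by norm_num
  have hS1 : ∑ i, (fderiv ℝ (fun x : ((Fin (n * M) → ℝ) × (Fin (n * M) → ℝ) × (Fin Mext → ℝ)) => Real.exp (-β * (((∑ i, (x.2.1 i) ^ 2 / (2 * m i)) + V x.1) + ∑ j, (x.2.2 j) ^ 2 / (2 * Q j))) • ((fun i => x.2.1 i / m i, fun i => -(fderiv ℝ V x.1 (Pi.single i 1)) - x.2.2 0 / Q 0 * x.2.1 i, fun (j : Fin Mext) => if (j : ℕ) = 0 then ((∑ i, (x.2.1 i) ^ 2 / m i) - (n * M : ℝ) / β) - x.2.2 (j + 1 : Fin Mext) / Q (j + 1 : Fin Mext) * x.2.2 j else if (j : ℕ) = Mext - 1 then (x.2.2 (j - 1 : Fin Mext)) ^ 2 / Q (j - 1 : Fin Mext) - 1 / β else ((x.2.2 (j - 1 : Fin Mext)) ^ 2 / Q (j - 1 : Fin Mext) - 1 / β) - x.2.2 (j + 1 : Fin Mext)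 / Q (j + 1 : Fin Mext) * x.2.2 j) : ((Fin (n * M) → ℝ) × (Fin (n * M) → ℝ) × (Fin Mext → ℝ)))) z ((Pi.single i 1 : Fin (n * M) → ℝ), (0 : Fin (n * M) → ℝ),
      (0 : Fin Mext → ℝ))).1 i =
      ∑ i, Real.exp (-β * (((∑ i, (z.2.1 i) ^ 2 / (2 * m i)) + V z.1) + ∑ j, (z.2.2 j) ^ 2 / (2 * Q j))) * (-β * (fderiv ℝ V z.1 (Pi.single i 1)) * (z.2.1 i / m i)) :=
    Finset.sum_congr rfl fun i _ => by rw [hcoord1]; exact e1 i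
  have hS2 : ∑ i, (fderiv ℝ (fun x : ((Fin (n * M) → ℝ) × (Fin (n * M) → ℝ) × (Fin Mext → ℝ)) => Real.exp (-β * (((∑ i, (x.2.1 i) ^ 2 / (2 * m i)) + V x.1) + ∑ j, (x.2.2 j) ^ 2 / (2 * Q j))) • ((fun i => x.2.1 i / m i, fun i => -(fderiv ℝ V x.1 (Pi.single i 1)) - x.2.2 0 / Q 0 * x.2.1 i, fun (j : Fin Mext) => if (j : ℕ) = 0 then ((∑ i, (x.2.1 i) ^ 2 / m i) - (n * M : ℝ) / β) - x.2.2 (j + 1 : Fin Mext) / Q (j + 1 : Fin Mext) * x.2.2 j else if (j : ℕ) = Mext - 1 then (x.2.2 (j - 1 : Fin Mext)) ^ 2 / Q (j - 1 : Fin Mext) - 1 / β else ((x.2.2 (j - 1 : Fin Mext)) ^ 2 / Q (j - 1 : Fin Mext) - 1 / β) - x.2.2 (j + 1 : Fin Mext) / Q (j + 1 : Fin Mext) * x.2.2 j) : ((Fin (n * M) → ℝ) × (Fin (n * M) → ℝ) × (Fin Mext → ℝ)))) z ((0 : Fin (n * M) → ℝ), (Pi.single i 1 : Fin (n * M) → 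ℝ),
      (0 : Fin Mext → ℝ))).2.1 i =
      ∑ i, Real.exp (-β * (((∑ i, (z.2.1 i) ^ 2 / (2 * m i)) + V z.1) + ∑ j, (z.2.2 j) ^ 2 / (2 * Q j))) * ((-β * (2 * z.2.1 i / (2 * m i))) *
        (-(fderiv ℝ V z.1 (Pi.single i 1)) - z.2.2 0 / Q 0 * z.2.1 i) + -(z.2.2 0 / Q 0)) :=
    Finset.sum_congr rfl fun i _ => by rw [hcoord2]; exact e2 i
  have hS3 : ∑ j, (fderiv ℝ (fun x : ((Fin (n * M) → ℝ) × (Fin (n * M) → ℝ) × (Fin Mext → ℝ)) => Real.exp (-β * (((∑ i, (x.2.1 i) ^ 2 / (2 * m i)) + V x.1) + ∑ j, (x.2.2 j) ^ 2 / (2 * Q j))) • ((fun i => x.2.1 i / m i, fun i => -(fderiv ℝ V x.1 (Pi.single i 1)) - x.2.2 0 / Q 0 * x.2.1 i, fun (j : Fin Mext) => if (j : ℕ) = 0 then ((∑ i, (x.2.1 i) ^ 2 / m i) - (n * M : ℝ) / β) - x.2.2 (j + 1 : Fin Mext) / Q (j + 1 : Fin Mext) * x.2.2 j else if (j : ℕ)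 = Mext - 1 then (x.2.2 (j - 1 : Fin Mext)) ^ 2 / Q (j - 1 : Fin Mext) - 1 / β else ((x.2.2 (j - 1 : Fin Mext)) ^ 2 / Q (j - 1 : Fin Mext) - 1 / β) - x.2.2 (j + 1 : Fin Mext) / Q (j + 1 : Fin Mext) * x.2.2 j) : ((Fin (n * M) → ℝ) × (Fin (n * M) → ℝ) × (Fin Mext → ℝ)))) z ((0 : Fin (n * M) → ℝ), (0 : Fin (n * M) → ℝ),
      (Pi.single j 1 : Fin Mext → ℝ))).2.2 j =
      ∑ j, Real.exp (-β * (((∑ i, (z.2.1 i) ^ 2 / (2 * m i)) + V z.1) + ∑ j, (z.2.2 j) ^ 2 / (2 * Q j))) * ((-β * (2 * z.2.2 j / (2 * Q j))) * (if ((j : Fin Mext) : ℕ) = 0 then ((∑ i, (z.2.1 i) ^ 2 / m i) - (n * M : ℝ) / β) - z.2.2 (j + 1 : Fin Mext) / Q (j + 1 : Fin Mext) * z.2.2 j else if ((j : Fin Mext) : ℕ) = Mext - 1 then (z.2.2 (j - 1 : Fin Mext)) ^ 2 / Q (j - 1 : Fin Mext) - 1 / β else ((z.2.2 (j - 1 :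 Fin Mext)) ^ 2 / Q (j - 1 : Fin Mext) - 1 / β) - z.2.2 (j + 1 : Fin Mext) / Q (j + 1 : Fin Mext) * z.2.2 j) + (if ((j : Fin Mext) : ℕ) = Mext - 1 then (0:ℝ) else -(z.2.2 (j + 1 : Fin Mext) / Q (j + 1 : Fin Mext)))) :=
    Finset.sum_congr rfl fun j _ => by rw [hcoord3]; exact e3 j
  rw [hS1, hS2, hS3]
  rw [← Finset.mul_sum, ← Finset.mul_sum, ← Finset.mul_sum, ← mul_add, ← mul_add]
  apply mul_eq_zero_of_right
  have hsum12 : (∑ i, (-β * (fderiv ℝ V z.1 (Pi.single i 1)) * (z.2.1 i / m i))) +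
      (∑ i, ((-β * (2 * z.2.1 i / (2 * m i))) *
        (-(fderiv ℝ V z.1 (Pi.single i 1)) - z.2.2 0 / Q 0 * z.2.1 i) + -(z.2.2 0 / Q 0))) =
      β * (z.2.2 0 / Q 0) * (∑ i, (z.2.1 i) ^ 2 / m i) - (n * M : ℝ) * (z.2.2 0 / Q 0) := by
    rw [← Finset.sum_add_distrib]
    have h : ∀ i : Fin (n * M), (-β * (fderiv ℝ V z.1 (Pi.single i 1)) * (z.2.1 i / m i)) +
        ((-β * (2 * z.2.1 i / (2 * m i))) *
          (-(fderiv ℝ V z.1 (Pi.single i 1)) - z.2.2 0 / Q 0 * z.2.1 i) + -(z.2.2 0 / Q 0)) =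
        β * (z.2.2 0 / Q 0) * ((z.2.1 i) ^ 2 / m i) - z.2.2 0 / Q 0 := by
      intro i
      rw [mul_div_mul_left _ _ h2ne]
      ring
    rw [Finset.sum_congr rfl fun i _ => h i, Finset.sum_sub_distrib, ← Finset.mul_sum,
      Finset.sum_const, Finset.card_univ, Fintype.card_fin, nsmul_eq_mul]
    push_cast
    ring
  have hco : ∀ j : Fin Mext, j + 1 - 1 = j := fun j => add_sub_cancel_right ..
  have hsum3 : (∑ j, ((-β * (2 * z.2.2 j / (2 * Q j))) * (if ((j : Fin Mext) : ℕ) = 0 then ((∑ i, (z.2.1 i) ^ 2 / m i) - (n * M : ℝ) / β) - z.2.2 (j + 1 : Fin Mext) / Q (j + 1 : Fin Mext) * z.2.2 j else if ((j : Fin Mext) : ℕ) = Mext - 1 then (z.2.2 (j - 1 : Fin Mext)) ^ 2 / Q (j - 1 : Fin Mext) - 1 / β else ((z.2.2 (j - 1 : Fin Mext)) ^ 2 / Q (j - 1 : Fin Mext) - 1 / β) - z.2.2 (j + 1 : Fin Mext) / Q (j + 1 : Fin Mext) * z.2.2 j) + (if ((j : Fin Mext) : ℕ) = Mext - 1 then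 (0:ℝ) else -(z.2.2 (j + 1 : Fin Mext) / Q (j + 1 : Fin Mext))))) =
      -β * (z.2.2 0 / Q 0) * ((∑ i, (z.2.1 i) ^ 2 / m i) - (n * M : ℝ) / β) := by
    have hstep : ∀ j : Fin Mext, (-β * (2 * z.2.2 j / (2 * Q j))) * (if ((j : Fin Mext) : ℕ) = 0 then ((∑ i, (z.2.1 i) ^ 2 / m i) - (n * M : ℝ) / β) - z.2.2 (j + 1 : Fin Mext) / Q (j + 1 : Fin Mext) * z.2.2 j else if ((j : Fin Mext) : ℕ) = Mext - 1 then (z.2.2 (j - 1 : Fin Mext)) ^ 2 / Q (j - 1 : Fin Mext) - 1 / β else ((z.2.2 (j - 1 : Fin Mext)) ^ 2 / Q (j - 1 : Fin Mext) - 1 / β) - z.2.2 (j + 1 : Fin Mext) / Q (j + 1 : Fin Mext) * z.2.2 j) + (if ((j : Fin Mext) : ℕ) = Mext - 1 then (0:ℝ) else -(z.2.2 (j + 1 : Fin Mext) / Q (j + 1 : Fin Mext))) =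
        ((if j = (0 : Fin Mext) then
            -β * (z.2.2 j / Q j) * ((∑ i, (z.2.1 i) ^ 2 / m i) - (n * M : ℝ) / β) else 0)
         + (if ((j : Fin Mext) : ℕ) = 0 then 0 else
            (-β * (z.2.2 j / Q j) * ((z.2.2 (j - 1)) ^ 2 / Q (j - 1)) + z.2.2 j / Q j)))
        + ((if ((j : Fin Mext) : ℕ) = Mext - 1 then 0 else
            β * (z.2.2 j / Q j) * (z.2.2 (j + 1) / Q (j + 1)) * z.2.2 j)
         + (if ((j : Fin Mext) : ℕ) = Mext - 1 then 0 else
            -(z.2.2 (j + 1) / Q (j + 1)))) := by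
      intro j
      rw [mul_div_mul_left _ _ h2ne]
      by_cases hj0 : (j : ℕ) = 0
      · have hjl : ¬((j : ℕ) = Mext - 1) := by omega
        have hj0' : j = 0 := Fin.ext hj0
        simp only [if_pos hj0, if_neg hjl, if_pos hj0']
        ring
      · have hj0' : ¬(j = 0) := fun h => hj0 (by rw [h]; rfl)
        by_cases hjl : (j : ℕ) = Mext - 1
        · simp only [if_neg hj0, if_pos hjl, if_neg hj0']
          linear_combination (z.2.2 j / Q j) * mul_inv_cancel₀ hβ'
        · simp only [if_neg hj0, if_neg hjl, if_neg hj0']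
          linear_combination (z.2.2 j / Q j) * mul_inv_cancel₀ hβ'
    rw [Finset.sum_congr rfl fun j _ => hstep j]
    rw [Finset.sum_add_distrib, Finset.sum_add_distrib, Finset.sum_add_distrib]
    rw [Finset.sum_ite_eq' Finset.univ (0 : Fin Mext)
      (fun j => -β * (z.2.2 j / Q j) * ((∑ i, (z.2.1 i) ^ 2 / m i) - (n * M : ℝ) / β))]
    simp only [Finset.mem_univ, if_true]
    have hT2 : (∑ j : Fin Mext, (if ((j : Fin Mext) : ℕ) = Mext - 1 then 0 else
        β * (z.2.2 j / Q j) * (z.2.2 (j + 1) / Q (j + 1)) * z.2.2 j)) =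
        ∑ j : Fin Mext, (if ((j : Fin Mext) : ℕ) = 0 then 0 else
        β * (z.2.2 (j - 1) / Q (j - 1)) * (z.2.2 j / Q j) * z.2.2 (j - 1)) := by
      rw [← fin_reindex hMext
        (fun j => β * (z.2.2 (j - 1) / Q (j - 1)) * (z.2.2 j / Q j) * z.2.2 (j - 1))]
      refine Finset.sum_congr rfl fun j _ => ?_
      by_cases hjl : (j : ℕ) = Mext - 1
      · simp [hjl]
      · simp only [if_neg hjl, hco]
    have hT3 : (∑ j : Fin Mext, (if ((j : Fin Mext) : ℕ) = Mext - 1 then 0 else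
        -(z.2.2 (j + 1) / Q (j + 1)))) =
        ∑ j : Fin Mext, (if ((j : Fin Mext) : ℕ) = 0 then 0 else -(z.2.2 j / Q j)) := by
      rw [← fin_reindex hMext (fun j => -(z.2.2 j / Q j))]
    rw [hT2, hT3]
    have hzero : (∑ j : Fin Mext, (if ((j : Fin Mext) : ℕ) = 0 then 0 else
        (-β * (z.2.2 j / Q j) * ((z.2.2 (j - 1)) ^ 2 / Q (j - 1)) + z.2.2 j / Q j)))
        + ((∑ j : Fin Mext, (if ((j : Fin Mext) : ℕ) = 0 then 0 else
          β * (z.2.2 (j - 1) / Q (j - 1)) * (z.2.2 j / Q j) * z.2.2 (j - 1)))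
         + (∑ j : Fin Mext, (if ((j : Fin Mext) : ℕ) = 0 then 0 else -(z.2.2 j / Q j)))) = 0 := by
      rw [← Finset.sum_add_distrib, ← Finset.sum_add_distrib]
      rw [show (0:ℝ) = ∑ _j : Fin Mext, (0:ℝ) by simp]
      refine Finset.sum_congr rfl fun j _ => ?_
      by_cases hj0 : (j : ℕ) = 0
      · simp [hj0]
      · simp only [if_neg hj0]
        ring
    linear_combination hzero
  rw [← add_assoc, hsum12, hsum3]
  push_cast
  linear_combination ((n : ℝ) * (M : ℝ) * (z.2.2 0 / Q 0)) * mul_inv_cancel₀ hβ'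
end
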